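/- arXiv:2106.03207 — 6 statements merged into one kernel-verified Lean document; each statement's English description precedes it below -/
import Mathlib

section
/- Pessimistic Policy Evaluation (lower bound / optimism of penalized model value): Let M be a finite-horizon MDP with finite state space S, finite action space A, horizon H, transition kernel P and initial distribution d₀. Suppose a model P̂ : S×A → Δ(S) and a function σ : S×A → ℝ≥0 satisfy ‖P̂(·|s,a) − P(·|s,a)‖₁ ≤ min(σ(s,a), 2) for all (s,a) ∈ S×A, and define the penalty b(s,a) = H·min(σ(s,a), 2). Then for every policy π : S → Δ(A) and every cost function f : S×A → [0,1], it holds that V^π_{P,f} ≤ V^π_{P̂, f+b}. -/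
open Finset

/-- Value-to-go with `n` steps remaining: expected cumulative cost of policy `pol`
under transition kernel `P` and cost function `f`, starting from a given state. -/
noncomputable def mdpVal {S A : Type*} [Fintype S] [Fintype A]
    (P : S → A → S → ℝ) (pol : S → A → ℝ) (f : S → A → ℝ) : ℕ → S → ℝ
  | 0, _ => 0
  | n + 1, s => ∑ a, pol s a * (f s a + ∑ s', P s a s' * mdpVal P pol f n s')

lemma mdpVal_nonneg {S A : Type*} [Fintype S] [Fintype A]
    (P : S → A → S → ℝ) (pol : S → A → ℝ) (f : S → A → ℝ)
    (hP : ∀ s a s', 0 ≤ P s a s') (hpol : ∀ s a, 0 ≤ pol s a)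
    (hf : ∀ s a, 0 ≤ f s a) : ∀ n s, 0 ≤ mdpVal P pol f n s := by
  intro n
  induction n with
  | zero => intro s; simp [mdpVal]
  | succ n ih =>
    intro s
    simp only [mdpVal]
    apply Finset.sum_nonneg
    intro a _
    apply mul_nonneg (hpol s a)
    have : 0 ≤ ∑ s', P s a s' * mdpVal P pol f n s' :=
      Finset.sum_nonneg fun s' _ => mul_nonneg (hP s a s') (ih s')
    linarith [hf s a]

lemma mdpVal_le {S A : Type*} [Fintype S] [Fintype A]
    (P : S → A → S → ℝ) (pol : S → A → ℝ) (f : S → A → ℝ)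
    (hP : ∀ s a, (∀ s', 0 ≤ P s a s') ∧ (∑ s', P s a s') = 1)
    (hpol : ∀ s, (∀ a, 0 ≤ pol s a) ∧ (∑ a, pol s a) = 1)
    (hf0 : ∀ s a, 0 ≤ f s a) (hf1 : ∀ s a, f s a ≤ 1) :
    ∀ n s, mdpVal P pol f n s ≤ n := by
  intro n
  induction n with
  | zero => intro s; simp [mdpVal]
  | succ n ih =>
    intro s
    simp only [mdpVal]
    have step : ∀ a, pol s a * (f s a + ∑ s', P s a s' * mdpVal P pol f n s')
        ≤ pol s a * (n + 1) := by
      intro a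
      apply mul_le_mul_of_nonneg_left _ ((hpol s).1 a)
      have h1 : ∑ s', P s a s' * mdpVal P pol f n s' ≤ ∑ s', P s a s' * n := by
        apply Finset.sum_le_sum
        intro s' _
        exact mul_le_mul_of_nonneg_left (ih s') ((hP s a).1 s')
      have h2 : ∑ s', P s a s' * (n:ℝ) = n := by
        rw [← Finset.sum_mul, (hP s a).2, one_mul]
      have := hf1 s a
      push_cast
      linarith
    calc ∑ a, pol s a * (f s a + ∑ s', P s a s' * mdpVal P pol f n s')
        ≤ ∑ a, pol s a * (n + 1) := Finset.sum_le_sum fun a _ => step a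
      _ = (n + 1 : ℝ) := by rw [← Finset.sum_mul, (hpol s).2, one_mul]
      _ = ((n + 1 : ℕ) : ℝ) := by push_cast; ring

/-- **Pessimistic Policy Evaluation (lower bound).** If the model `Phat` is calibrated,
i.e. `‖Phat(·|s,a) − P(·|s,a)‖₁ ≤ min (σ s a) 2` for all `(s,a)`, and the penalty is
`b s a = H * min (σ s a) 2`, then for every policy and every cost `f` with values in
`[0,1]`, the true value is at most the penalized model value:
`V^π_{P,f} ≤ V^π_{Phat, f + b}`. -/
theorem pessimistic_policy_evaluation_lower
    {S A : Type*} [Fintype S] [Fintype A]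
    (H : ℕ) (P Phat : S → A → S → ℝ) (d0 : S → ℝ)
    (hP : ∀ s a, (∀ s', 0 ≤ P s a s') ∧ (∑ s', P s a s') = 1)
    (hPhat : ∀ s a, (∀ s', 0 ≤ Phat s a s') ∧ (∑ s', Phat s a s') = 1)
    (hd0 : (∀ s, 0 ≤ d0 s) ∧ (∑ s, d0 s) = 1)
    (σ : S → A → ℝ) (hσ : ∀ s a, 0 ≤ σ s a)
    (hcal : ∀ s a, (∑ s', |Phat s a s' - P s a s'|) ≤ min (σ s a) 2)
    (pol : S → A → ℝ) (hpol : ∀ s, (∀ a, 0 ≤ pol s a) ∧ (∑ a, pol s a) = 1)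
    (f : S → A → ℝ) (hf : ∀ s a, f s a ∈ Set.Icc (0:ℝ) 1) :
    (∑ s, d0 s * mdpVal P pol f H s)
      ≤ ∑ s, d0 s * mdpVal Phat pol (fun s a => f s a + H * min (σ s a) 2) H s := by

  have hb : ∀ s a, 0 ≤ min (σ s a) 2 := fun s a => le_min (hσ s a) (by norm_num)
  have hVnn : ∀ n s, 0 ≤ mdpVal P pol f n s :=
    mdpVal_nonneg P pol f (fun s a => (hP s a).1) (fun s => (hpol s).1)
      (fun s a => (hf s a).1)
  have hVle : ∀ n s, mdpVal P pol f n s ≤ n :=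
    mdpVal_le P pol f hP hpol (fun s a => (hf s a).1) (fun s a => (hf s a).2)
  have key : ∀ n, n ≤ H → ∀ s, mdpVal P pol f n s
      ≤ mdpVal Phat pol (fun s a => f s a + H * min (σ s a) 2) n s := by
    intro n
    induction n with
    | zero => intro _ s; simp [mdpVal]
    | succ n ih =>
      intro hn s
      simp only [mdpVal]
      apply Finset.sum_le_sum
      intro a _
      apply mul_le_mul_of_nonneg_left _ ((hpol s).1 a)
      have hVabs : ∀ s', |mdpVal P pol f n s'| ≤ (H:ℝ) := by
        intro s'
        rw [abs_of_nonneg (hVnn n s')]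
        calc mdpVal P pol f n s' ≤ n := hVle n s'
          _ ≤ (H:ℝ) := by exact_mod_cast Nat.le_of_succ_le hn
      have h1 : ∑ s', P s a s' * mdpVal P pol f n s'
          ≤ (∑ s', Phat s a s' * mdpVal P pol f n s') + H * min (σ s a) 2 := by
        have hd : ∑ s', (P s a s' - Phat s a s') * mdpVal P pol f n s'
            ≤ (H:ℝ) * min (σ s a) 2 := by
          calc ∑ s', (P s a s' - Phat s a s') * mdpVal P pol f n s'
              ≤ ∑ s', |Phat s a s' - P s a s'| * (H:ℝ) := by
                apply Finset.sum_le_sum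
                intro s' _
                calc (P s a s' - Phat s a s') * mdpVal P pol f n s'
                    ≤ |(P s a s' - Phat s a s') * mdpVal P pol f n s'| := le_abs_self _
                  _ = |P s a s' - Phat s a s'| * |mdpVal P pol f n s'| := abs_mul _ _
                  _ = |Phat s a s' - P s a s'| * |mdpVal P pol f n s'| := by
                      rw [abs_sub_comm]
                  _ ≤ |Phat s a s' - P s a s'| * (H:ℝ) :=
                      mul_le_mul_of_nonneg_left (hVabs s') (abs_nonneg _)
            _ = (∑ s', |Phat s a s' - P s a s'|) * (H:ℝ) := by rw [Finset.sum_mul]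
            _ ≤ min (σ s a) 2 * (H:ℝ) :=
                mul_le_mul_of_nonneg_right (hcal s a) (Nat.cast_nonneg _)
            _ = (H:ℝ) * min (σ s a) 2 := mul_comm _ _
        have : ∑ s', (P s a s' - Phat s a s') * mdpVal P pol f n s'
            = (∑ s', P s a s' * mdpVal P pol f n s')
              - ∑ s', Phat s a s' * mdpVal P pol f n s' := by
          rw [← Finset.sum_sub_distrib]
          congr 1; ext s'; ring
        linarith [hd, this]
      have h2 : ∑ s', Phat s a s' * mdpVal P pol f n s'
          ≤ ∑ s', Phat s a s' * mdpVal Phat pol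
              (fun s a => f s a + H * min (σ s a) 2) n s' := by
        apply Finset.sum_le_sum
        intro s' _
        exact mul_le_mul_of_nonneg_left (ih (Nat.le_of_succ_le hn) s') ((hPhat s a).1 s')
      linarith
  apply Finset.sum_le_sum
  intro s _
  exact mul_le_mul_of_nonneg_left (key H le_rfl s) (hd0.1 s)
end

section
/- Offline error bound for discrete (tabular) MDPs: Let M be a finite-horizon MDP with finite state space S, finite action space A, horizon H, transition kernel P, and expert policy πₑ with average state-action distribution d^{πₑ}_P. Let (s₁,a₁),…,(s_{n_o},a_{n_o}) be i.i.d. samples from a distribution ρ ∈ Δ(S×A), let N(s,a) denote the number of indices i with (sᵢ,aᵢ) = (s,a), and for λ ≥ 1 and 0 < δ < 1 define σ(s,a) = √( (|S|·log 2 + log(2|S||A|/δ)) / (2(N(s,a)+λ)) ) + λ/(N(s,a)+λ). Assume the partial coverage condition C^{πₑ} := max_{(s,a)} d^{πₑ}_P(s,a)/ρ(s,a) < ∞. Then there exist universal constants c₁, c₂ such that with probability at least 1 − δ, 8H²·E_{(s,a)∼d^{πₑ}_P}[min(σ(s,a), 1)] ≤ c₁·λ·H²·log(c₂|S||A|/δ)·(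 √( C^{πₑ}·|S|²·|A| / n_o ) + C^{πₑ}·|S|·|A| / n_o ). -/
open Finset
open scoped Classical

/-- State distribution after `n` transitions; the expert average state-action
distribution is `d^{πe}_P (s,a) = (1/H) * ∑_{h<H} stDist P πe d0 h s * πe s a`. -/
noncomputable def stDist {S A : Type*} [Fintype S] [Fintype A]
    (P : S → A → S → ℝ) (pol : S → A → ℝ) (d0 : S → ℝ) : ℕ → S → ℝ
  | 0 => d0
  | n + 1 => fun s' => ∑ s, ∑ a, stDist P pol d0 n s * pol s a * P s a s'

lemma stDist_nonneg {S A : Type*} [Fintype S] [Fintype A]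
    (P : S → A → S → ℝ) (hP : ∀ s a s', 0 ≤ P s a s')
    (pol : S → A → ℝ) (hpol : ∀ s a, 0 ≤ pol s a)
    (d0 : S → ℝ) (hd0 : ∀ s, 0 ≤ d0 s) : ∀ n s, 0 ≤ stDist P pol d0 n s := by
  intro n
  induction n with
  | zero => exact hd0
  | succ n ih =>
    intro s'
    simp only [stDist]
    refine Finset.sum_nonneg fun s _ => Finset.sum_nonneg fun a _ => ?_
    exact mul_nonneg (mul_nonneg (ih s) (hpol s a)) (hP s a s')

lemma stDist_sum {S A : Type*} [Fintype S] [Fintype A]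
    (P : S → A → S → ℝ) (hP : ∀ s a, ∑ s', P s a s' = 1)
    (pol : S → A → ℝ) (hpol : ∀ s, ∑ a, pol s a = 1)
    (d0 : S → ℝ) (hd0 : ∑ s, d0 s = 1) : ∀ n, ∑ s, stDist P pol d0 n s = 1 := by
  intro n
  induction n with
  | zero => exact hd0
  | succ n ih =>
    simp only [stDist]
    rw [Finset.sum_comm]
    have key : ∀ s, ∑ s', ∑ a, stDist P pol d0 n s * pol s a * P s a s'
        = stDist P pol d0 n s := by
      intro s
      rw [Finset.sum_comm]
      have : ∀ a, ∑ s', stDist P pol d0 n s * pol s a * P s a s'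
          = stDist P pol d0 n s * pol s a := by
        intro a
        rw [← Finset.mul_sum, hP, mul_one]
      simp only [this]
      rw [← Finset.mul_sum, hpol, mul_one]
    simp only [key]
    exact ih

lemma sum_prod_fn {X : Type*} [Fintype X] [DecidableEq X] (n : ℕ) (g : X → ℝ) :
    ∑ ω : Fin n → X, ∏ i, g (ω i) = (∑ x, g x) ^ n := by
  rw [← Fintype.piFinset_univ, ← Finset.prod_univ_sum]
  simp

lemma chernoff {X : Type*} [Fintype X] [DecidableEq X] (ρ : X → ℝ) (hρ0 : ∀ x, 0 ≤ ρ x)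
    (z : X) (n : ℕ) (a : ℝ) :
    ∑ ω : Fin n → X, (if ((univ.filter fun i => ω i = z).card : ℝ) ≤ a
        then ∏ i, ρ (ω i) else 0)
      ≤ Real.exp (a * Real.log 2) * (∑ x, ρ x - ρ z / 2) ^ n := by
  set h : X → ℝ := fun x => ρ x * (if x = z then 1/2 else 1) with hh
  have hsum : ∑ x, h x = ∑ x, ρ x - ρ z / 2 := by
    have : ∀ x, h x = ρ x - (if x = z then ρ z / 2 else 0) := by
      intro x
      simp only [hh]
      split <;> rename_i hx
      · subst hx; ring
      · ring
    simp only [this, Finset.sum_sub_distrib, Finset.sum_ite_eq', Finset.mem_univ, if_true]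
  have hnn : ∀ x, 0 ≤ h x := by
    intro x
    refine mul_nonneg (hρ0 x) ?_
    split <;> norm_num
  calc ∑ ω : Fin n → X, (if ((univ.filter fun i => ω i = z).card : ℝ) ≤ a
        then ∏ i, ρ (ω i) else 0)
      ≤ ∑ ω : Fin n → X, Real.exp (a * Real.log 2) * ∏ i, h (ω i) := by
        refine Finset.sum_le_sum fun ω _ => ?_
        have hprod : ∏ i, h (ω i)
            = (∏ i, ρ (ω i)) * (1/2 : ℝ) ^ (univ.filter fun i => ω i = z).card := by
          simp only [hh]
          rw [Finset.prod_mul_distrib]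
          congr 1
          rw [Finset.prod_ite, Finset.prod_const, Finset.prod_const]
          simp
        split <;> rename_i hcase
        · rw [hprod, ← mul_assoc, mul_comm (Real.exp _), mul_assoc]
          have hρnn : 0 ≤ ∏ i, ρ (ω i) := Finset.prod_nonneg fun i _ => hρ0 (ω i)
          nth_rewrite 1 [← mul_one (∏ i, ρ (ω i))]
          refine mul_le_mul_of_nonneg_left ?_ hρnn
          set N := (univ.filter fun i => ω i = z).card
          have h2 : ((1:ℝ)/2) ^ N = Real.exp (-(N : ℝ) * Real.log 2) := by
            rw [show (-(N:ℝ)) * Real.log 2 = (N:ℝ) * (-Real.log 2) by ring,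
              Real.exp_nat_mul, Real.exp_neg, Real.exp_log (by norm_num : (0:ℝ) < 2)]
            norm_num
          rw [h2, ← Real.exp_add]
          rw [show (1:ℝ) = Real.exp 0 by simp]
          apply Real.exp_le_exp.mpr
          have : 0 ≤ (a - N) * Real.log 2 :=
            mul_nonneg (by linarith) (Real.log_nonneg (by norm_num))
          nlinarith
        · exact mul_nonneg (Real.exp_nonneg _)
            (Finset.prod_nonneg fun i _ => hnn (ω i))
  _ = Real.exp (a * Real.log 2) * (∑ x, ρ x - ρ z / 2) ^ n := by
        rw [← Finset.mul_sum, sum_prod_fn, hsum]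

set_option maxHeartbeats 2000000 in
/-- **Offline error bound for discrete (tabular) MDPs.** There exist universal
constants `c₁, c₂` such that for every tabular MDP, expert policy `πe`, offline data
distribution `ρ` with partial coverage `d^{πe}_P (s,a) ≤ C * ρ (s,a)`, for i.i.d.
offline samples `ω : Fin n_o → S × A` from `ρ`, with probability at least `1 − δ`,
`8H² · E_{(s,a)∼d^{πe}_P}[min (σ_ω (s,a)) 1]` is at most
`c₁·λ·H²·log(c₂|S||A|/δ)·(√(C|S|²|A|/n_o) + C|S||A|/n_o)`, where
`σ_ω (s,a) = √((|S| log 2 + log(2|S||A|/δ)) / (2(N(s,a)+λ))) + λ/(N(s,a)+λ)` and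
`N(s,a)` is the empirical count of `(s,a)` in `ω`. -/
theorem tabular_offline_error_bound :
    ∃ c₁ c₂ : ℝ, 0 < c₁ ∧ 0 < c₂ ∧
      ∀ (S A : Type) [Fintype S] [Fintype A] [DecidableEq S] [DecidableEq A]
        (H : ℕ), 0 < H →
        ∀ (P : S → A → S → ℝ), (∀ s a, (∀ s', 0 ≤ P s a s') ∧ (∑ s', P s a s') = 1) →
        ∀ (d0 : S → ℝ), ((∀ s, 0 ≤ d0 s) ∧ (∑ s, d0 s) = 1) →
        ∀ (πe : S → A → ℝ), (∀ s, (∀ a, 0 ≤ πe s a) ∧ (∑ a, πe s a) = 1) →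
        ∀ (ρ : S × A → ℝ), ((∀ z, 0 ≤ ρ z) ∧ (∑ z, ρ z) = 1) →
        ∀ (C : ℝ), 0 ≤ C →
        (∀ s a, ((1 / (H:ℝ)) * ∑ h ∈ range H, stDist P πe d0 h s * πe s a)
            ≤ C * ρ (s, a)) →
        ∀ (n_o : ℕ), 0 < n_o → ∀ (lam : ℝ), 1 ≤ lam →
        ∀ (δ : ℝ), 0 < δ → δ < 1 →
        1 - δ ≤ ∑ ω : Fin n_o → S × A,
          (if 8 * (H:ℝ)^2 * (∑ s, ∑ a,
                  ((1 / (H:ℝ)) * ∑ h ∈ range H, stDist P πe d0 h s * πe s a)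
                  * min (Real.sqrt ((Fintype.card S * Real.log 2
                          + Real.log (2 * Fintype.card S * Fintype.card A / δ))
                        / (2 * (((univ.filter fun i => ω i = (s, a)).card : ℝ) + lam)))
                      + lam / (((univ.filter fun i => ω i = (s, a)).card : ℝ) + lam)) 1)
                ≤ c₁ * lam * (H:ℝ)^2 * Real.log (c₂ * Fintype.card S * Fintype.card A / δ)
                  * (Real.sqrt (C * (Fintype.card S : ℝ)^2 * Fintype.card A / n_o)
                    + C * Fintype.card S * Fintype.card A / n_o)
            then ∏ i, ρ (ω i) else 0) := by
  refine ⟨64, 8, by norm_num, by norm_num, ?_⟩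
  intro S A _ _ _ _ H hH P hP d0 hd0 πe hπe ρ hρ C hC hcov n_o hn lam hlam δ hδ hδ1
  -- Nonemptiness
  rcases isEmpty_or_nonempty (S × A) with hemp | hne
  · exfalso
    have h1 := hρ.2
    rw [Finset.univ_eq_empty, Finset.sum_empty] at h1
    norm_num at h1
  have hS : Nonempty S := ⟨hne.some.1⟩
  have hA : Nonempty A := ⟨hne.some.2⟩
  -- abbreviations
  set Sc := ((Fintype.card S : ℝ)) with hSc_def
  set Ac := ((Fintype.card A : ℝ)) with hAc_def
  have hSc1 : 1 ≤ Sc := by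
    rw [hSc_def]; exact_mod_cast Fintype.card_pos
  have hAc1 : 1 ≤ Ac := by
    rw [hAc_def]; exact_mod_cast Fintype.card_pos
  set K := Real.log (8 * Sc * Ac / δ) with hK_def
  set L := Sc * Real.log 2 + Real.log (2 * Sc * Ac / δ) with hL_def
  have hn' : (0:ℝ) < n_o := by exact_mod_cast hn
  have hlam0 : (0:ℝ) < lam := by linarith
  have h8pos : (0:ℝ) < 8 * Sc * Ac / δ := by positivity
  have hK2 : 2 ≤ K := by
    have hexp2 : Real.exp 2 < 8 := by
      rw [show (2:ℝ) = 1 + 1 by norm_num, Real.exp_add]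
      nlinarith [Real.exp_one_lt_d9, Real.exp_pos 1]
    have h8le : (8:ℝ) ≤ 8 * Sc * Ac / δ := by
      rw [le_div_iff₀ hδ]
      nlinarith
    have := Real.log_le_log (by norm_num) h8le
    have hlog8 : 2 < Real.log 8 :=
      (Real.lt_log_iff_exp_lt (by norm_num)).mpr hexp2
    linarith
  have hK0 : 0 < K := by linarith
  have hlog2K : Real.log 2 ≤ K := by
    have : Real.log 2 ≤ Real.log 8 := Real.log_le_log (by norm_num) (by norm_num)
    have h8le : (8:ℝ) ≤ 8 * Sc * Ac / δ := by
      rw [le_div_iff₀ hδ]; nlinarith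
    have := Real.log_le_log (by norm_num : (0:ℝ) < 2) (by linarith : (2:ℝ) ≤ 8 * Sc * Ac / δ)
    linarith
  have hlog2SA : Real.log (2 * Sc * Ac / δ) ≤ K := by
    rw [hK_def]
    apply Real.log_le_log (by positivity)
    rw [div_le_div_iff₀ hδ hδ]
    nlinarith [mul_pos (mul_pos (show (0:ℝ) < Sc by linarith) (show (0:ℝ) < Ac by linarith)) hδ]
  have hL0 : 0 ≤ L := by
    rw [hL_def]
    have h1 : 0 ≤ Real.log 2 := Real.log_nonneg (by norm_num)
    have h2 : 0 ≤ Real.log (2 * Sc * Ac / δ) := by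
      apply Real.log_nonneg
      rw [le_div_iff₀ hδ]; nlinarith
    nlinarith
  have hLK : L ≤ 2 * Sc * K := by
    rw [hL_def]
    nlinarith [hlog2K, hlog2SA, hSc1]
  -- the expert occupancy measure
  set d : S × A → ℝ :=
    fun z => (1 / (H:ℝ)) * ∑ h ∈ range H, stDist P πe d0 h z.1 * πe z.1 z.2 with hd_def
  have hd_nn : ∀ z, 0 ≤ d z := by
    intro z
    refine mul_nonneg (by positivity) (Finset.sum_nonneg fun h _ => mul_nonneg ?_ ?_)
    · exact stDist_nonneg P (fun s a => (hP s a).1) πe (fun s => (hπe s).1) d0 hd0.1 h z.1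
    · exact (hπe z.1).1 z.2
  have hd_sum : ∑ z, d z = 1 := by
    rw [Fintype.sum_prod_type]
    have step1 : ∀ s : S, ∑ a, d (s, a)
        = (1 / (H:ℝ)) * ∑ h ∈ range H, stDist P πe d0 h s := by
      intro s
      simp only [hd_def]
      rw [← Finset.mul_sum]
      congr 1
      rw [Finset.sum_comm]
      refine Finset.sum_congr rfl fun h _ => ?_
      rw [← Finset.mul_sum, (hπe s).2, mul_one]
    simp only [step1]
    rw [← Finset.mul_sum, Finset.sum_comm]
    have step2 : ∀ h ∈ range H, ∑ s, stDist P πe d0 h s = 1 := fun h _ =>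
      stDist_sum P (fun s a => (hP s a).2) πe (fun s => (hπe s).2) d0 hd0.2 h
    rw [Finset.sum_congr rfl step2, Finset.sum_const, Finset.card_range, nsmul_eq_mul, mul_one]
    field_simp
  have hcov' : ∀ z : S × A, d z ≤ C * ρ z := fun z => hcov z.1 z.2
  have hρ1 : ∀ z : S × A, ρ z ≤ 1 := by
    intro z
    rw [← hρ.2]
    exact Finset.single_le_sum (fun x _ => hρ.1 x) (Finset.mem_univ z)
  -- empirical counts / event
  set N : (Fin n_o → S × A) → S × A → ℝ :=
    fun ω z => ((univ.filter fun i => ω i = z).card : ℝ) with hN_def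
  set G : Finset (S × A) := univ.filter fun z => 4 * K ≤ (n_o : ℝ) * ρ z with hG_def
  set Ev : (Fin n_o → S × A) → Prop :=
    fun ω => ∀ z ∈ G, (n_o : ℝ) * ρ z / 4 < N ω z with hEv_def
  have hprod_nn : ∀ ω : Fin n_o → S × A, 0 ≤ ∏ i, ρ (ω i) :=
    fun ω => Finset.prod_nonneg fun i _ => hρ.1 (ω i)
  have hcardSA : ((Fintype.card (S × A) : ℝ)) = Sc * Ac := by
    rw [Fintype.card_prod]
    push_cast
    rfl
  -- probability of the bad event
  have PB : ∑ ω : Fin n_o → S × A, (if ¬ Ev ω then ∏ i, ρ (ω i) else 0) ≤ δ := by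
    have point : ∀ ω : Fin n_o → S × A, (if ¬ Ev ω then ∏ i, ρ (ω i) else 0)
        ≤ ∑ z ∈ G, (if N ω z ≤ (n_o : ℝ) * ρ z / 4 then ∏ i, ρ (ω i) else 0) := by
      intro ω
      split <;> rename_i hcase
      · simp only [hEv_def, not_forall] at hcase
        obtain ⟨z₀, hz₀G, hz₀⟩ := hcase
        have hz₀' : N ω z₀ ≤ (n_o : ℝ) * ρ z₀ / 4 := by linarith [not_lt.mp hz₀]
        calc ∏ i, ρ (ω i)
            = (if N ω z₀ ≤ (n_o : ℝ) * ρ z₀ / 4 then ∏ i, ρ (ω i) else 0) := by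
              rw [if_pos hz₀']
          _ ≤ _ := Finset.single_le_sum (f := fun z =>
                (if N ω z ≤ (n_o : ℝ) * ρ z / 4 then ∏ i, ρ (ω i) else 0))
              (fun z _ => by split_ifs <;> [exact hprod_nn ω; exact le_rfl]) hz₀G
      · refine Finset.sum_nonneg fun z _ => ?_
        split_ifs <;> [exact hprod_nn ω; exact le_rfl]
    calc ∑ ω : Fin n_o → S × A, (if ¬ Ev ω then ∏ i, ρ (ω i) else 0)
        ≤ ∑ ω : Fin n_o → S × A, ∑ z ∈ G,
            (if N ω z ≤ (n_o : ℝ) * ρ z / 4 then ∏ i, ρ (ω i) else 0) :=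
          Finset.sum_le_sum fun ω _ => point ω
      _ = ∑ z ∈ G, ∑ ω : Fin n_o → S × A,
            (if N ω z ≤ (n_o : ℝ) * ρ z / 4 then ∏ i, ρ (ω i) else 0) :=
          Finset.sum_comm
      _ ≤ ∑ z ∈ G, δ / (8 * Sc * Ac) := by
          refine Finset.sum_le_sum fun z hz => ?_
          have hzG : 4 * K ≤ (n_o : ℝ) * ρ z := by
            rw [hG_def] at hz
            exact (Finset.mem_filter.mp hz).2
          have hch := chernoff ρ hρ.1 z n_o ((n_o : ℝ) * ρ z / 4)
          rw [hρ.2] at hch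
          refine le_trans hch ?_
          have hp0 : 0 ≤ ρ z := hρ.1 z
          have hp1 : ρ z ≤ 1 := hρ1 z
          have hpow : (1 - ρ z / 2) ^ n_o ≤ Real.exp ((n_o : ℝ) * (- (ρ z / 2))) := by
            rw [Real.exp_nat_mul]
            refine pow_le_pow_left₀ (by linarith) ?_ n_o
            linarith [Real.add_one_le_exp (-(ρ z / 2))]
          calc Real.exp ((n_o : ℝ) * ρ z / 4 * Real.log 2) * (1 - ρ z / 2) ^ n_o
              ≤ Real.exp ((n_o : ℝ) * ρ z / 4 * Real.log 2)
                * Real.exp ((n_o : ℝ) * (- (ρ z / 2))) :=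
                mul_le_mul_of_nonneg_left hpow (Real.exp_nonneg _)
            _ = Real.exp ((n_o : ℝ) * ρ z / 4 * Real.log 2 - (n_o : ℝ) * ρ z / 2) := by
                rw [← Real.exp_add]; ring_nf
            _ ≤ Real.exp (-K) := by
                apply Real.exp_le_exp.mpr
                have hlog2 : Real.log 2 ≤ 1 := by
                  nlinarith [Real.log_two_lt_d9]
                have hnp : 0 ≤ (n_o : ℝ) * ρ z := by positivity
                nlinarith
            _ = δ / (8 * Sc * Ac) := by
                rw [hK_def, ← Real.log_inv, Real.exp_log (by positivity)]
                rw [inv_div]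
      _ ≤ δ := by
          rw [Finset.sum_const, nsmul_eq_mul]
          have hGle : (G.card : ℝ) ≤ Sc * Ac := by
            rw [← hcardSA]
            exact_mod_cast Finset.card_le_card (Finset.subset_univ G) |>.trans
              (le_of_eq (Finset.card_univ))
          have : 0 < 8 * Sc * Ac := by nlinarith
          rw [div_eq_mul_inv]
          calc (G.card : ℝ) * (δ * (8 * Sc * Ac)⁻¹)
              ≤ (Sc * Ac) * (δ * (8 * Sc * Ac)⁻¹) := by
                refine mul_le_mul_of_nonneg_right hGle (by positivity)
            _ ≤ δ := by
                rw [mul_comm, mul_assoc]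
                nth_rewrite 2 [← mul_one δ]
                refine mul_le_mul_of_nonneg_left ?_ (le_of_lt hδ)
                rw [inv_mul_le_iff₀ this]
                nlinarith
  -- deterministic bound on the good event
  have hT1nn : 0 ≤ Real.sqrt (C * Sc ^ 2 * Ac / n_o) := Real.sqrt_nonneg _
  have hT2nn : (0:ℝ) ≤ C * Sc * Ac / n_o := by positivity
  have DB : ∀ ω : Fin n_o → S × A, Ev ω →
      ∑ z : S × A, d z * min (Real.sqrt (L / (2 * (N ω z + lam))) + lam / (N ω z + lam)) 1
        ≤ 8 * lam * K * (Real.sqrt (C * Sc ^ 2 * Ac / n_o) + C * Sc * Ac / n_o) := by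
    intro ω hEω
    have hNnn : ∀ z, (0:ℝ) ≤ N ω z := fun z => Nat.cast_nonneg _
    set f : S × A → ℝ :=
      fun z => d z * min (Real.sqrt (L / (2 * (N ω z + lam))) + lam / (N ω z + lam)) 1
      with hf_def
    have hsplit : ∑ z : S × A, f z = ∑ z ∈ G, f z
        + ∑ z ∈ univ.filter (fun z => ¬ (4 * K ≤ (n_o : ℝ) * ρ z)), f z := by
      rw [hG_def]
      exact (Finset.sum_filter_add_sum_filter_not univ _ f).symm
    -- good part
    have good : ∑ z ∈ G, f z
        ≤ Real.sqrt (Sc * Ac * C) * Real.sqrt (2 * L / n_o) + Sc * Ac * (4 * lam * C / n_o) := by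
      have term : ∀ z ∈ G, f z
          ≤ Real.sqrt (C * d z) * Real.sqrt (2 * L / n_o) + 4 * lam * C / n_o := by
        intro z hz
        have hzρ : 4 * K ≤ (n_o : ℝ) * ρ z := by
          rw [hG_def] at hz
          exact (Finset.mem_filter.mp hz).2
        have hρz : 0 < ρ z := by
          rcases lt_or_eq_of_le (hρ.1 z) with h | h
          · exact h
          · exfalso; rw [← h, mul_zero] at hzρ; nlinarith
        have hnρ : 0 < (n_o : ℝ) * ρ z := by positivity
        have hNz : (n_o : ℝ) * ρ z / 4 < N ω z := hEω z hz
        have hNlam : 0 < N ω z + lam := by linarith [hNnn z]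
        have hquarter : (n_o : ℝ) * ρ z / 4 ≤ N ω z + lam := by linarith
        have hs1 : Real.sqrt (L / (2 * (N ω z + lam)))
            ≤ Real.sqrt (2 * L / ((n_o : ℝ) * ρ z)) := by
          apply Real.sqrt_le_sqrt
          rw [div_le_div_iff₀ (by linarith) hnρ]
          nlinarith [mul_le_mul_of_nonneg_left hquarter hL0]
        have hs2 : lam / (N ω z + lam) ≤ 4 * lam / ((n_o : ℝ) * ρ z) := by
          rw [div_le_div_iff₀ hNlam hnρ]
          nlinarith [mul_le_mul_of_nonneg_left hquarter (le_of_lt hlam0)]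
        have hmin : min (Real.sqrt (L / (2 * (N ω z + lam))) + lam / (N ω z + lam)) 1
            ≤ Real.sqrt (2 * L / ((n_o : ℝ) * ρ z)) + 4 * lam / ((n_o : ℝ) * ρ z) := by
          refine le_trans (min_le_left _ _) ?_
          linarith
        have step1 : f z ≤ d z * (Real.sqrt (2 * L / ((n_o : ℝ) * ρ z))
            + 4 * lam / ((n_o : ℝ) * ρ z)) := by
          rw [hf_def]
          exact mul_le_mul_of_nonneg_left hmin (hd_nn z)
        have hρzne : ρ z ≠ 0 := ne_of_gt hρz
        have hnne : (n_o : ℝ) ≠ 0 := ne_of_gt hn'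
        have bnd1 : d z * Real.sqrt (2 * L / ((n_o : ℝ) * ρ z))
            ≤ Real.sqrt (C * d z) * Real.sqrt (2 * L / n_o) := by
          have e1 : d z * Real.sqrt (2 * L / ((n_o : ℝ) * ρ z))
              = Real.sqrt (d z ^ 2 * (2 * L / ((n_o : ℝ) * ρ z))) := by
            rw [Real.sqrt_mul (by positivity) _, Real.sqrt_sq (hd_nn z)]
          have e2 : d z ^ 2 * (2 * L / ((n_o : ℝ) * ρ z))
              ≤ (C * d z) * (2 * L / (n_o : ℝ)) := by
            have h1 : d z ^ 2 * (2 * L / ((n_o : ℝ) * ρ z))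
                = (d z ^ 2 / ρ z) * (2 * L / (n_o : ℝ)) := by
              rw [div_mul_div_comm, mul_comm (ρ z) ((n_o : ℝ))]
              exact (mul_div_assoc _ _ _).symm
            have h2 : d z ^ 2 / ρ z ≤ C * d z := by
              rw [div_le_iff₀ hρz]
              nlinarith [hcov' z, hd_nn z]
            rw [h1]
            exact mul_le_mul_of_nonneg_right h2 (by positivity)
          rw [e1, ← Real.sqrt_mul (mul_nonneg hC (hd_nn z))]
          exact Real.sqrt_le_sqrt e2
        have bnd2 : d z * (4 * lam / ((n_o : ℝ) * ρ z)) ≤ 4 * lam * C / n_o := by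
          have h1 : d z * (4 * lam / ((n_o : ℝ) * ρ z))
              ≤ (C * ρ z) * (4 * lam / ((n_o : ℝ) * ρ z)) :=
            mul_le_mul_of_nonneg_right (hcov' z) (by positivity)
          have h2 : (C * ρ z) * (4 * lam / ((n_o : ℝ) * ρ z)) = 4 * lam * C / n_o := by
            rw [mul_comm (C * ρ z) _, div_mul_eq_mul_div,
              div_eq_div_iff (mul_ne_zero hnne hρzne) hnne]
            ring
          linarith
        calc f z ≤ d z * (Real.sqrt (2 * L / ((n_o : ℝ) * ρ z))
              + 4 * lam / ((n_o : ℝ) * ρ z)) := step1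
          _ = d z * Real.sqrt (2 * L / ((n_o : ℝ) * ρ z))
              + d z * (4 * lam / ((n_o : ℝ) * ρ z)) := by ring
          _ ≤ _ := add_le_add bnd1 bnd2
      have hsumnn : 0 ≤ ∑ z ∈ G, Real.sqrt (C * d z) :=
        Finset.sum_nonneg fun z _ => Real.sqrt_nonneg _
      have hCS : ∑ z ∈ G, Real.sqrt (C * d z) ≤ Real.sqrt (Sc * Ac * C) := by
        have h1 : (∑ z ∈ G, Real.sqrt (C * d z)) ^ 2
            ≤ (G.card : ℝ) * ∑ z ∈ G, (C * d z) := by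
          have h0 := sq_sum_le_card_mul_sum_sq (s := G) (f := fun z => Real.sqrt (C * d z))
          have he : ∑ z ∈ G, (Real.sqrt (C * d z)) ^ 2 = ∑ z ∈ G, (C * d z) :=
            Finset.sum_congr rfl fun z _ =>
              Real.sq_sqrt (mul_nonneg hC (hd_nn z))
          rw [he] at h0
          exact h0
        have h2 : ∑ z ∈ G, (C * d z) ≤ C := by
          rw [← Finset.mul_sum]
          nth_rewrite 2 [← mul_one C]
          refine mul_le_mul_of_nonneg_left ?_ hC
          rw [← hd_sum]
          exact Finset.sum_le_sum_of_subset_of_nonneg (Finset.subset_univ G)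
            fun z _ _ => hd_nn z
        have h2' : (0:ℝ) ≤ ∑ z ∈ G, (C * d z) :=
          Finset.sum_nonneg fun z _ => mul_nonneg hC (hd_nn z)
        have hGcard : (G.card : ℝ) ≤ Sc * Ac := by
          rw [← hcardSA, ← Finset.card_univ]
          exact_mod_cast Finset.card_le_card (Finset.subset_univ G)
        have h3 : (∑ z ∈ G, Real.sqrt (C * d z)) ^ 2 ≤ Sc * Ac * C := by
          calc (∑ z ∈ G, Real.sqrt (C * d z)) ^ 2
              ≤ (G.card : ℝ) * ∑ z ∈ G, (C * d z) := h1
            _ ≤ (Sc * Ac) * ∑ z ∈ G, (C * d z) :=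
              mul_le_mul_of_nonneg_right hGcard h2'
            _ ≤ Sc * Ac * C := by
                refine mul_le_mul_of_nonneg_left h2 ?_
                nlinarith
        calc ∑ z ∈ G, Real.sqrt (C * d z)
            = Real.sqrt ((∑ z ∈ G, Real.sqrt (C * d z)) ^ 2) :=
              (Real.sqrt_sq hsumnn).symm
          _ ≤ Real.sqrt (Sc * Ac * C) := Real.sqrt_le_sqrt h3
      calc ∑ z ∈ G, f z
          ≤ ∑ z ∈ G, (Real.sqrt (C * d z) * Real.sqrt (2 * L / n_o) + 4 * lam * C / n_o) :=
            Finset.sum_le_sum term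
        _ = (∑ z ∈ G, Real.sqrt (C * d z)) * Real.sqrt (2 * L / n_o)
            + (G.card : ℝ) * (4 * lam * C / n_o) := by
            rw [Finset.sum_add_distrib, ← Finset.sum_mul, Finset.sum_const, nsmul_eq_mul]
        _ ≤ Real.sqrt (Sc * Ac * C) * Real.sqrt (2 * L / n_o)
            + Sc * Ac * (4 * lam * C / n_o) := by
            have hGcard : (G.card : ℝ) ≤ Sc * Ac := by
              rw [← hcardSA, ← Finset.card_univ]
              exact_mod_cast Finset.card_le_card (Finset.subset_univ G)
            refine add_le_add (mul_le_mul_of_nonneg_right hCS (Real.sqrt_nonneg _)) ?_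
            exact mul_le_mul_of_nonneg_right hGcard (by positivity)
    -- the good part is controlled by the first term of the target
    have good2 : Real.sqrt (Sc * Ac * C) * Real.sqrt (2 * L / n_o)
        ≤ 2 * K * Real.sqrt (C * Sc ^ 2 * Ac / n_o) := by
      rw [← Real.sqrt_mul (by positivity)]
      have h5 : Sc * Ac * C * (2 * L / n_o) ≤ (2 * K) ^ 2 * (C * Sc ^ 2 * Ac / n_o) := by
        have hL2 : L ≤ 2 * Sc * K * K := by nlinarith [hLK, hK2, hSc1, hK0]
        have ha : Sc * Ac * C * (2 * L / n_o) = (Sc * Ac * C * (2 * L)) / n_o := by ring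
        have hb : (2 * K) ^ 2 * (C * Sc ^ 2 * Ac / n_o)
            = ((2 * K) ^ 2 * (C * Sc ^ 2 * Ac)) / n_o := by ring
        rw [ha, hb, div_le_div_iff₀ hn' hn']
        have hkey := mul_le_mul_of_nonneg_left hL2
          (show (0:ℝ) ≤ 2 * Ac * C * Sc by positivity)
        nlinarith [hkey, hn']
      calc Real.sqrt (Sc * Ac * C * (2 * L / n_o))
          ≤ Real.sqrt ((2 * K) ^ 2 * (C * Sc ^ 2 * Ac / n_o)) := Real.sqrt_le_sqrt h5
        _ = 2 * K * Real.sqrt (C * Sc ^ 2 * Ac / n_o) := by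
            rw [Real.sqrt_mul (by positivity), Real.sqrt_sq (by linarith)]
    -- bad part
    have bad : ∑ z ∈ univ.filter (fun z => ¬ (4 * K ≤ (n_o : ℝ) * ρ z)), f z
        ≤ Sc * Ac * (4 * C * K / n_o) := by
      have term : ∀ z ∈ univ.filter (fun z => ¬ (4 * K ≤ (n_o : ℝ) * ρ z)),
          f z ≤ 4 * C * K / n_o := by
        intro z hz
        have hzρ : (n_o : ℝ) * ρ z < 4 * K := by
          have := (Finset.mem_filter.mp hz).2
          exact lt_of_not_ge this
        have h1 : f z ≤ d z := by
          rw [hf_def]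
          exact mul_le_of_le_one_right (hd_nn z) (min_le_right _ _)
        have h2 : d z ≤ C * ρ z := hcov' z
        have h3 : ρ z ≤ 4 * K / n_o := by
          rw [le_div_iff₀ hn']
          nlinarith
        have h4 : C * ρ z ≤ 4 * C * K / n_o := by
          calc C * ρ z ≤ C * (4 * K / n_o) := mul_le_mul_of_nonneg_left h3 hC
            _ = 4 * C * K / n_o := by ring
        linarith
      calc ∑ z ∈ univ.filter (fun z => ¬ (4 * K ≤ (n_o : ℝ) * ρ z)), f z
          ≤ (univ.filter (fun z => ¬ (4 * K ≤ (n_o : ℝ) * ρ z))).card • (4 * C * K / n_o) :=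
            Finset.sum_le_card_nsmul _ _ _ term
        _ ≤ Sc * Ac * (4 * C * K / n_o) := by
            rw [nsmul_eq_mul]
            refine mul_le_mul_of_nonneg_right ?_ (by positivity)
            rw [← hcardSA, ← Finset.card_univ]
            exact_mod_cast Finset.card_le_card (Finset.subset_univ _)
    -- combine
    rw [hsplit]
    have final : Real.sqrt (Sc * Ac * C) * Real.sqrt (2 * L / n_o)
        + Sc * Ac * (4 * lam * C / n_o) + Sc * Ac * (4 * C * K / n_o)
        ≤ 8 * lam * K * (Real.sqrt (C * Sc ^ 2 * Ac / n_o) + C * Sc * Ac / n_o) := by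
      have e1 : 2 * K * Real.sqrt (C * Sc ^ 2 * Ac / n_o)
          ≤ 8 * lam * K * Real.sqrt (C * Sc ^ 2 * Ac / n_o) := by
        refine mul_le_mul_of_nonneg_right ?_ hT1nn
        nlinarith
      have e2 : Sc * Ac * (4 * lam * C / n_o) + Sc * Ac * (4 * C * K / n_o)
          ≤ 8 * lam * K * (C * Sc * Ac / n_o) := by
        have h1 : Sc * Ac * (4 * lam * C / n_o) = (4 * lam) * (C * Sc * Ac / n_o) := by ring
        have h2 : Sc * Ac * (4 * C * K / n_o) = (4 * K) * (C * Sc * Ac / n_o) := by ring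
        rw [h1, h2, ← add_mul]
        refine mul_le_mul_of_nonneg_right ?_ hT2nn
        nlinarith
      nlinarith [good2]
    linarith
  -- conclusion
  have sum_split : ∑ ω : Fin n_o → S × A, (if Ev ω then ∏ i, ρ (ω i) else 0)
      + ∑ ω : Fin n_o → S × A, (if ¬ Ev ω then ∏ i, ρ (ω i) else 0) = 1 := by
    rw [← Finset.sum_add_distrib]
    have hpt : ∀ ω : Fin n_o → S × A, (if Ev ω then ∏ i, ρ (ω i) else 0)
        + (if ¬ Ev ω then ∏ i, ρ (ω i) else 0) = ∏ i, ρ (ω i) := by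
      intro ω
      by_cases h : Ev ω
      · rw [if_pos h, if_neg (not_not_intro h), add_zero]
      · rw [if_neg h, if_pos h, zero_add]
    rw [Finset.sum_congr rfl (fun ω _ => hpt ω), sum_prod_fn, hρ.2, one_pow]
  have mono : ∑ ω : Fin n_o → S × A, (if Ev ω then ∏ i, ρ (ω i) else 0)
      ≤ ∑ ω : Fin n_o → S × A,
        (if 8 * (H:ℝ)^2 * (∑ s, ∑ a,
              ((1 / (H:ℝ)) * ∑ h ∈ range H, stDist P πe d0 h s * πe s a)
              * min (Real.sqrt (L
                    / (2 * (((univ.filter fun i => ω i = (s, a)).card : ℝ) + lam)))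
                  + lam / (((univ.filter fun i => ω i = (s, a)).card : ℝ) + lam)) 1)
            ≤ 64 * lam * (H:ℝ)^2 * K
              * (Real.sqrt (C * Sc ^ 2 * Ac / n_o) + C * Sc * Ac / n_o)
        then ∏ i, ρ (ω i) else 0) := by
    refine Finset.sum_le_sum fun ω _ => ?_
    by_cases h : Ev ω
    · have e : (∑ s, ∑ a,
            ((1 / (H:ℝ)) * ∑ h ∈ range H, stDist P πe d0 h s * πe s a)
            * min (Real.sqrt (L
                  / (2 * (((univ.filter fun i => ω i = (s, a)).card : ℝ) + lam)))
                + lam / (((univ.filter fun i => ω i = (s, a)).card : ℝ) + lam)) 1)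
          = ∑ z : S × A, d z * min (Real.sqrt (L / (2 * (N ω z + lam)))
              + lam / (N ω z + lam)) 1 := by
        rw [Fintype.sum_prod_type (f := fun z : S × A =>
          d z * min (Real.sqrt (L / (2 * (N ω z + lam))) + lam / (N ω z + lam)) 1)]
      have hc : 8 * (H:ℝ)^2 * (∑ s, ∑ a,
            ((1 / (H:ℝ)) * ∑ h ∈ range H, stDist P πe d0 h s * πe s a)
            * min (Real.sqrt (L
                  / (2 * (((univ.filter fun i => ω i = (s, a)).card : ℝ) + lam)))
                + lam / (((univ.filter fun i => ω i = (s, a)).card : ℝ) + lam)) 1)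
          ≤ 64 * lam * (H:ℝ)^2 * K
            * (Real.sqrt (C * Sc ^ 2 * Ac / n_o) + C * Sc * Ac / n_o) := by
        rw [e]
        calc 8 * (H:ℝ)^2 * (∑ z : S × A, d z * min (Real.sqrt (L / (2 * (N ω z + lam)))
              + lam / (N ω z + lam)) 1)
            ≤ 8 * (H:ℝ)^2 * (8 * lam * K
              * (Real.sqrt (C * Sc ^ 2 * Ac / n_o) + C * Sc * Ac / n_o)) := by
              refine mul_le_mul_of_nonneg_left (DB ω h) ?_
              positivity
          _ = 64 * lam * (H:ℝ)^2 * K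
              * (Real.sqrt (C * Sc ^ 2 * Ac / n_o) + C * Sc * Ac / n_o) := by ring
      rw [if_pos h, if_pos hc]
    · rw [if_neg h]
      split_ifs
      · exact hprod_nn ω
      · exact le_rfl
  linarith [PB, sum_split, mono]
end

section
/- Concentration of inverse empirical counts: Let Z be a finite set, ρ a probability distribution on Z, and z₁,…,z_{n_o} i.i.d. samples from ρ. For z ∈ Z let N(z) = #{i : zᵢ = z}. Then for any λ ≥ 1 and 0 < δ < 1, there exist universal constants c₁, c₂ such that with probability at least 1 − δ, for every z ∈ Z, 1/(N(z)+λ) ≤ c₁·log(c₂|Z|/δ) / (n_o·ρ(z) + λ). -/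
open Finset
open scoped Classical

lemma sum_prod_fn_aux {Z : Type} [Fintype Z] (n : ℕ) (f : Z → ℝ) :
    ∑ ω : Fin n → Z, ∏ i, f (ω i) = (∑ x, f x) ^ n := by
  rw [← Fintype.prod_sum (fun _ : Fin n => f)]
  simp [Finset.prod_const]

lemma prod_ite_card_aux {ι : Type} [Fintype ι] (P : ι → Prop) [DecidablePred P] (c : ℝ) :
    ∏ i, (if P i then c else 1) = c ^ (univ.filter P).card := by
  rw [← Finset.prod_filter_mul_prod_filter_not univ P (fun i => if P i then c else 1)]
  rw [Finset.prod_congr rfl (fun i hi => if_pos (Finset.mem_filter.mp hi).2),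
      Finset.prod_congr rfl (fun i hi => if_neg (Finset.mem_filter.mp hi).2),
      Finset.prod_const, Finset.prod_const_one, mul_one]

set_option maxHeartbeats 1000000 in
/-- **Concentration of inverse empirical counts.** There exist universal constants
`c₁, c₂` such that for any finite set `Z`, probability distribution `ρ` on `Z`, and
i.i.d. samples `ω : Fin n_o → Z` from `ρ`, for any `λ ≥ 1` and `0 < δ < 1`, with
probability at least `1 − δ`, simultaneously for every `z ∈ Z`,
`1/(N(z)+λ) ≤ c₁·log(c₂|Z|/δ)/(n_o·ρ(z)+λ)`, where `N(z)` is the number of samples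
equal to `z`. -/
theorem inverse_count_concentration :
    ∃ c₁ c₂ : ℝ, 0 < c₁ ∧ 0 < c₂ ∧
      ∀ (Z : Type) [Fintype Z] [DecidableEq Z]
        (ρ : Z → ℝ), ((∀ z, 0 ≤ ρ z) ∧ (∑ z, ρ z) = 1) →
        ∀ (n_o : ℕ), 0 < n_o → ∀ (lam : ℝ), 1 ≤ lam →
        ∀ (δ : ℝ), 0 < δ → δ < 1 →
        1 - δ ≤ ∑ ω : Fin n_o → Z,
          (if ∀ z : Z,
              1 / (((univ.filter fun i => ω i = z).card : ℝ) + lam)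
                ≤ c₁ * Real.log (c₂ * Fintype.card Z / δ) / (n_o * ρ z + lam)
            then ∏ i, ρ (ω i) else 0) := by
  refine ⟨5, Real.exp 5, by norm_num, Real.exp_pos 5, ?_⟩
  intro Z _ _ ρ hρ n_o hn lam hlam δ hδ0 hδ1
  obtain ⟨hρ0, hρ1⟩ := hρ
  have hZne : Nonempty Z := by
    rcases isEmpty_or_nonempty Z with h | h
    · exfalso; rw [Finset.univ_eq_empty, Finset.sum_empty] at hρ1; exact one_ne_zero hρ1.symm
    · exact h
  have hρle1 : ∀ z, ρ z ≤ 1 := by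
    intro z
    calc ρ z ≤ ∑ x, ρ x := Finset.single_le_sum (fun i _ => hρ0 i) (mem_univ z)
    _ = 1 := hρ1
  set m : ℝ := (Fintype.card Z : ℝ) with hmdef
  have hm1 : (1:ℝ) ≤ m := by
    have : 0 < Fintype.card Z := Fintype.card_pos
    rw [hmdef]; exact_mod_cast this
  have hmpos : (0:ℝ) < m := lt_of_lt_of_le one_pos hm1
  set L : ℝ := Real.log (m / δ) with hLdef
  have hL0 : 0 ≤ L := Real.log_nonneg (by rw [le_div_iff₀ hδ0]; linarith)
  set C : ℝ := 5 * Real.log (Real.exp 5 * m / δ) with hCdef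
  have hCL : C = 25 + 5 * L := by
    rw [hCdef, hLdef, mul_div_assoc,
      Real.log_mul (Real.exp_ne_zero 5) (by positivity), Real.log_exp]
    ring
  have hC25 : (25:ℝ) ≤ C := by rw [hCL]; linarith
  have hCpos : (0:ℝ) < C := by linarith
  have hlampos : (0:ℝ) < lam := lt_of_lt_of_le one_pos hlam
  set w : (Fin n_o → Z) → ℝ := fun ω => ∏ i, ρ (ω i) with hwdef
  have hw0 : ∀ ω, 0 ≤ w ω := fun ω => Finset.prod_nonneg (fun i _ => hρ0 _)
  have hwsum : ∑ ω : Fin n_o → Z, w ω = 1 := by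
    rw [hwdef]; rw [sum_prod_fn_aux n_o ρ, hρ1, one_pow]
  set cond : Z → (Fin n_o → Z) → Prop := fun z ω =>
    1 / (((univ.filter fun i => ω i = z).card : ℝ) + lam) ≤ C / (n_o * ρ z + lam)
    with hconddef
  -- per-z bound
  have key : ∀ z : Z, (∑ ω : Fin n_o → Z, if ¬ cond z ω then w ω else 0) ≤ δ / m := by
    intro z
    set p : ℝ := ρ z with hpdef
    have hp0 : 0 ≤ p := hρ0 z
    have hp1 : p ≤ 1 := hρle1 z
    set N : (Fin n_o → Z) → ℕ := fun ω => (univ.filter fun i => ω i = z).card with hNdef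
    have hdenpos : ∀ ω, (0:ℝ) < (N ω : ℝ) + lam := by
      intro ω; positivity
    have hnp0 : (0:ℝ) ≤ (n_o : ℝ) * p := by positivity
    have hnplam : (0:ℝ) < (n_o : ℝ) * p + lam := by positivity
    by_cases hcase : (n_o : ℝ) * p ≤ (C - 1) * lam
    · -- trivial case: cond always holds
      have hall : ∀ ω, cond z ω := by
        intro ω
        show 1 / ((N ω : ℝ) + lam) ≤ C / ((n_o : ℝ) * p + lam)
        rw [div_le_div_iff₀ (hdenpos ω) hnplam]
        have hN0 : (0:ℝ) ≤ (N ω : ℝ) := Nat.cast_nonneg _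
        nlinarith
      calc (∑ ω : Fin n_o → Z, if ¬ cond z ω then w ω else 0)
          = ∑ ω : Fin n_o → Z, (0:ℝ) := by
            apply Finset.sum_congr rfl; intro ω _
            rw [if_neg (not_not_intro (hall ω))]
        _ = 0 := by simp
        _ ≤ δ / m := by positivity
    · push_neg at hcase
      set a : ℝ := (n_o : ℝ) * p / C with hadef
      have ha0 : 0 ≤ a := by positivity
      have hCa : C * a = (n_o : ℝ) * p := by
        rw [hadef]; field_simp
      have hfailN : ∀ ω, ¬ cond z ω → (N ω : ℝ) ≤ a := by
        intro ω hf
        have hf' : ¬ (1 / ((N ω : ℝ) + lam) ≤ C / ((n_o : ℝ) * p + lam)) := hf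
        simp only [not_le] at hf'
        rw [div_lt_div_iff₀ hnplam (hdenpos ω)] at hf'
        rw [← hCa] at hf'
        nlinarith [hdenpos ω]
      have hpoint : ∀ ω, (if ¬ cond z ω then w ω else 0)
          ≤ w ω * ((2:ℝ) ^ a * ((1:ℝ)/2) ^ (N ω)) := by
        intro ω
        by_cases hf : ¬ cond z ω
        · rw [if_pos hf]
          have h1 : (1:ℝ) ≤ (2:ℝ) ^ a * ((1:ℝ)/2) ^ (N ω) := by
            have hhalf : ((1:ℝ)/2) ^ (N ω) = (2:ℝ) ^ (-(N ω : ℝ)) := by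
              rw [Real.rpow_neg (by norm_num : (0:ℝ) ≤ 2), Real.rpow_natCast]
              simp [one_div, inv_pow]
            rw [hhalf, ← Real.rpow_add (by norm_num : (0:ℝ) < 2)]
            calc (1:ℝ) = (2:ℝ) ^ (0:ℝ) := (Real.rpow_zero 2).symm
              _ ≤ (2:ℝ) ^ (a + -(N ω : ℝ)) := by
                  rw [Real.rpow_le_rpow_left_iff (by norm_num : (1:ℝ) < 2)]
                  have := hfailN ω hf; linarith
          nlinarith [hw0 ω]
        · rw [if_neg hf]
          have h2 : (0:ℝ) ≤ (2:ℝ) ^ a * ((1:ℝ)/2) ^ (N ω) := by positivity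
          exact mul_nonneg (hw0 ω) h2
      have hsum : ∑ ω : Fin n_o → Z, w ω * ((2:ℝ) ^ a * ((1:ℝ)/2) ^ (N ω))
          = (2:ℝ) ^ a * (1 - p/2) ^ n_o := by
        have hterm : ∀ ω : Fin n_o → Z, w ω * ((2:ℝ) ^ a * ((1:ℝ)/2) ^ (N ω))
            = (2:ℝ) ^ a * ∏ i, (ρ (ω i) * (if ω i = z then (1:ℝ)/2 else 1)) := by
          intro ω
          have hhalfprod : ((1:ℝ)/2) ^ (N ω) = ∏ i, (if ω i = z then (1:ℝ)/2 else 1) := by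
            rw [prod_ite_card_aux (fun i => ω i = z) ((1:ℝ)/2)]
          rw [hhalfprod]
          simp only [hwdef]
          rw [Finset.prod_mul_distrib]
          ring
        rw [Finset.sum_congr rfl (fun ω _ => hterm ω), ← Finset.mul_sum]
        congr 1
        rw [sum_prod_fn_aux n_o (fun x => ρ x * (if x = z then (1:ℝ)/2 else 1))]
        congr 1
        have : ∀ x, ρ x * (if x = z then (1:ℝ)/2 else 1)
            = ρ x - (if x = z then ρ z / 2 else 0) := by
          intro x
          by_cases h : x = z
          · subst h; rw [if_pos rfl, if_pos rfl]; ring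
          · simp [h]
        rw [Finset.sum_congr rfl (fun x _ => this x), Finset.sum_sub_distrib, hρ1,
          Finset.sum_ite_eq' univ z (fun _ => ρ z / 2), if_pos (mem_univ z)]
      have hlog2 : Real.log 2 ≤ 1 := by
        have := Real.log_le_sub_one_of_pos (by norm_num : (0:ℝ) < 2)
        linarith
      have hlog2pos : 0 ≤ Real.log 2 := Real.log_nonneg (by norm_num)
      have hfin : Real.log 2 * a + (n_o : ℝ) * (-(p/2)) ≤ Real.log (δ / m) := by
        have hlogdm : Real.log (δ / m) = -L := by
          rw [hLdef, ← Real.log_inv, inv_div]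
        rw [hlogdm]
        have h2 : (n_o : ℝ) * (-(p/2)) = -(C*a)/2 := by rw [hCa]; ring
        rw [h2]
        have hCage : C - 1 ≤ C * a := by
          rw [hCa]
          have : (C - 1) * 1 ≤ (C - 1) * lam :=
            mul_le_mul_of_nonneg_left hlam (by linarith)
          linarith
        have hprod : 0 ≤ (C - 4 * Real.log 2) * a :=
          mul_nonneg (by linarith) ha0
        have h3 : Real.log 2 * a ≤ C * a / 4 := by nlinarith [hprod]
        have h4 : 24 + 5 * L ≤ C * a := by linarith
        linarith
      calc (∑ ω : Fin n_o → Z, if ¬ cond z ω then w ω else 0)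
          ≤ ∑ ω : Fin n_o → Z, w ω * ((2:ℝ) ^ a * ((1:ℝ)/2) ^ (N ω)) :=
            Finset.sum_le_sum (fun ω _ => hpoint ω)
        _ = (2:ℝ) ^ a * (1 - p/2) ^ n_o := hsum
        _ ≤ (2:ℝ) ^ a * Real.exp (-(p/2)) ^ n_o := by
            apply mul_le_mul_of_nonneg_left _ (Real.rpow_nonneg (by norm_num) a)
            apply pow_le_pow_left₀ (by linarith)
            have := Real.add_one_le_exp (-(p/2))
            linarith
        _ = Real.exp (Real.log 2 * a + (n_o : ℝ) * (-(p/2))) := by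
            rw [Real.rpow_def_of_pos (by norm_num : (0:ℝ) < 2), ← Real.exp_nat_mul,
              ← Real.exp_add]
        _ ≤ Real.exp (Real.log (δ / m)) := Real.exp_le_exp.mpr hfin
        _ = δ / m := Real.exp_log (by positivity)
  -- union bound
  have hpt : ∀ ω, (if ¬ (∀ z, cond z ω) then w ω else 0)
      ≤ ∑ z, (if ¬ cond z ω then w ω else 0) := by
    intro ω
    have hnn : ∀ z ∈ (univ : Finset Z), (0:ℝ) ≤ if ¬ cond z ω then w ω else 0 := by
      intro z _
      by_cases hf : ¬ cond z ω <;> simp [hf, hw0 ω]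
    by_cases h : ∀ z, cond z ω
    · rw [if_neg (not_not_intro h)]
      exact Finset.sum_nonneg hnn
    · rw [if_pos h]
      push_neg at h
      obtain ⟨z₀, hz₀⟩ := h
      calc w ω = if ¬ cond z₀ ω then w ω else 0 := by rw [if_pos hz₀]
        _ ≤ ∑ z, (if ¬ cond z ω then w ω else 0) :=
            Finset.single_le_sum hnn (mem_univ z₀)
  have hbad : ∑ ω : Fin n_o → Z, (if ¬ (∀ z, cond z ω) then w ω else 0) ≤ δ := by
    calc ∑ ω : Fin n_o → Z, (if ¬ (∀ z, cond z ω) then w ω else 0)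
        ≤ ∑ ω : Fin n_o → Z, ∑ z, (if ¬ cond z ω then w ω else 0) :=
          Finset.sum_le_sum (fun ω _ => hpt ω)
      _ = ∑ z, ∑ ω : Fin n_o → Z, (if ¬ cond z ω then w ω else 0) := Finset.sum_comm
      _ ≤ ∑ _z : Z, δ / m := Finset.sum_le_sum (fun z _ => key z)
      _ = δ := by
          simp only [Finset.sum_const, Finset.card_univ, nsmul_eq_mul]
          rw [← hmdef]
          field_simp
  have hsplit : ∑ ω : Fin n_o → Z, (if (∀ z, cond z ω) then w ω else 0)
      = 1 - ∑ ω : Fin n_o → Z, (if ¬ (∀ z, cond z ω) then w ω else 0) := by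
    have h1 : ∀ ω : Fin n_o → Z, (if (∀ z, cond z ω) then w ω else 0)
        + (if ¬ (∀ z, cond z ω) then w ω else 0) = w ω := by
      intro ω; by_cases h : ∀ z, cond z ω <;> simp [h]
    rw [eq_sub_iff_add_eq, ← Finset.sum_add_distrib,
      Finset.sum_congr rfl (fun ω _ => h1 ω), hwsum]
  calc 1 - δ ≤ 1 - ∑ ω : Fin n_o → Z, (if ¬ (∀ z, cond z ω) then w ω else 0) := by linarith
    _ = ∑ ω : Fin n_o → Z, (if (∀ z, cond z ω) then w ω else 0) := hsplit.symm
    _ = ∑ ω : Fin n_o → Z,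
          (if ∀ z : Z,
              1 / (((univ.filter fun i => ω i = z).card : ℝ) + lam)
                ≤ 5 * Real.log (Real.exp 5 * Fintype.card Z / δ) / (n_o * ρ z + lam)
            then ∏ i, ρ (ω i) else 0) := rfl
end

section
/- Deterministic first-step bound on the log-determinant (information gain): Let φ₁,…,φ_{n_o} ∈ ℝ^d satisfy ‖φᵢ‖₂ ≤ 1 for all i, let λ > 0, and set Σ_{n_o} = Σ_{i=1}^{n_o} φᵢφᵢᵀ + λI. Then log( det(Σ_{n_o}) / det(λI) ) ≤ ( log(1 + n_o/λ) + 1 ) · tr( Σ_{n_o}^{-1} · Σ_{i=1}^{n_o} φᵢφᵢᵀ ). -/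
open Matrix Finset

lemma aux_log (x y : ℝ) (hx : 0 ≤ x) (hxy : x ≤ y) :
    Real.log (1+x) ≤ (Real.log (1+y) + 1) * (x / (1+x)) := by
  have h1 : (0:ℝ) < 1 + x := by linarith
  have hlogx : Real.log (1+x) ≤ x := by
    have := Real.log_le_sub_one_of_pos h1; linarith
  have hmono : Real.log (1+x) ≤ Real.log (1+y) := Real.log_le_log h1 (by linarith)
  have h2 : x * Real.log (1+x) ≤ x * Real.log (1+y) := mul_le_mul_of_nonneg_left hmono hx
  rw [← mul_div_assoc, le_div_iff₀ h1]
  nlinarith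

set_option maxHeartbeats 1000000 in
/-- **Deterministic first-step bound on the log-determinant (information gain).**
For vectors `φ₁,…,φ_{n_o}` in the Euclidean unit ball of `ℝ^d` and `λ > 0`, with
`Σ_{n_o} = ∑ᵢ φᵢφᵢᵀ + λI`,
`log(det Σ_{n_o} / det(λI)) ≤ (log(1 + n_o/λ) + 1) · tr(Σ_{n_o}⁻¹ · ∑ᵢ φᵢφᵢᵀ)`. -/
theorem logdet_first_step_bound
    (d n_o : ℕ) (φ : Fin n_o → Fin d → ℝ)
    (hφ : ∀ i, ∑ j, (φ i j) ^ 2 ≤ 1)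
    (lam : ℝ) (hlam : 0 < lam) :
    Real.log ((∑ i, vecMulVec (φ i) (φ i) + lam • (1 : Matrix (Fin d) (Fin d) ℝ)).det
        / (lam • (1 : Matrix (Fin d) (Fin d) ℝ)).det)
      ≤ (Real.log (1 + n_o / lam) + 1)
        * ((∑ i, vecMulVec (φ i) (φ i) + lam • (1 : Matrix (Fin d) (Fin d) ℝ))⁻¹
            * ∑ i, vecMulVec (φ i) (φ i)).trace := by
  set A : Matrix (Fin d) (Fin d) ℝ := ∑ i, vecMulVec (φ i) (φ i) with hAdef
  -- A is positive semidefinite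
  have hPSD : A.PosSemidef := by
    rw [hAdef]
    apply Finset.sum_induction _ _ (fun a b ha hb => ha.add hb) Matrix.PosSemidef.zero
    intro i _
    have : vecMulVec (φ i) (φ i) = (replicateRow Unit (φ i))ᴴ * replicateRow Unit (φ i) := by
      rw [vecMulVec_eq Unit, conjTranspose_replicateRow]; simp
    rw [this]
    exact posSemidef_conjTranspose_mul_self _
  have hA : A.IsHermitian := hPSD.isHermitian
  set μ : Fin d → ℝ := hA.eigenvalues with hμdef
  set U : Matrix (Fin d) (Fin d) ℝ := (hA.eigenvectorUnitary : Matrix (Fin d) (Fin d) ℝ) with hUdef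
  have hUU : Uᴴ * U = 1 := by
    simpa [hUdef, star_eq_conjTranspose] using
      (Matrix.mem_unitaryGroup_iff'.mp hA.eigenvectorUnitary.2)
  have hUU' : U * Uᴴ = 1 := by
    simpa [hUdef, star_eq_conjTranspose] using
      (Matrix.mem_unitaryGroup_iff.mp hA.eigenvectorUnitary.2)
  have hspec : A = U * diagonal μ * Uᴴ := by
    have := hA.spectral_theorem
    simpa [hUdef, hμdef, star_eq_conjTranspose, Function.comp] using this
  have hμ0 : ∀ i, 0 ≤ μ i := hPSD.eigenvalues_nonneg
  -- trace of A and eigenvalue bound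
  have htrA : A.trace = ∑ i, μ i := by
    calc A.trace = (U * diagonal μ * Uᴴ).trace := by rw [← hspec]
      _ = (Uᴴ * U * diagonal μ).trace := by
          rw [Matrix.trace_mul_comm, ← Matrix.mul_assoc]
      _ = ∑ i, μ i := by rw [hUU, one_mul, trace_diagonal]
  have htrA' : A.trace ≤ n_o := by
    rw [hAdef, trace_sum]
    calc ∑ i, (vecMulVec (φ i) (φ i)).trace ≤ ∑ _i : Fin n_o, (1:ℝ) := by
          apply Finset.sum_le_sum
          intro i _
          simpa [Matrix.trace, Matrix.diag, vecMulVec_apply, pow_two] using hφ i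
      _ = n_o := by simp
  have hμle : ∀ i, μ i ≤ n_o := by
    intro i
    have : μ i ≤ ∑ j, μ j :=
      Finset.single_le_sum (fun j _ => hμ0 j) (Finset.mem_univ i)
    calc μ i ≤ ∑ j, μ j := this
      _ = A.trace := htrA.symm
      _ ≤ n_o := htrA'
  have hpos : ∀ i, 0 < μ i + lam := fun i => by have := hμ0 i; linarith
  -- Sigma decomposition
  have hSig : A + lam • (1 : Matrix (Fin d) (Fin d) ℝ)
      = U * diagonal (fun i => μ i + lam) * Uᴴ := by
    have h1 : (lam • (1 : Matrix (Fin d) (Fin d) ℝ)) = U * (lam • 1) * Uᴴ := by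
      rw [Matrix.mul_smul, mul_one, Matrix.smul_mul, hUU']
    rw [hspec, h1, ← Matrix.add_mul, ← Matrix.mul_add]
    congr 2
    rw [smul_one_eq_diagonal, diagonal_add]
  -- inverse
  have hinv : (A + lam • (1 : Matrix (Fin d) (Fin d) ℝ))⁻¹
      = U * diagonal (fun i => (μ i + lam)⁻¹) * Uᴴ := by
    apply Matrix.inv_eq_right_inv
    rw [hSig]
    calc U * diagonal (fun i => μ i + lam) * Uᴴ * (U * diagonal (fun i => (μ i + lam)⁻¹) * Uᴴ)
        = U * diagonal (fun i => μ i + lam) * (Uᴴ * U) * diagonal (fun i => (μ i + lam)⁻¹) * Uᴴ := by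
          noncomm_ring
      _ = U * (diagonal (fun i => μ i + lam) * diagonal (fun i => (μ i + lam)⁻¹)) * Uᴴ := by
          rw [hUU, mul_one]; noncomm_ring
      _ = 1 := by
          rw [diagonal_mul_diagonal]
          have : (fun i => (μ i + lam) * (μ i + lam)⁻¹) = fun _ => (1:ℝ) := by
            funext i; exact mul_inv_cancel₀ (hpos i).ne'
          rw [this, diagonal_one, mul_one, hUU']
  -- trace of Σ⁻¹ A
  have htr : ((A + lam • (1 : Matrix (Fin d) (Fin d) ℝ))⁻¹ * A).trace
      = ∑ i, (μ i + lam)⁻¹ * μ i := by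
    rw [hinv]
    conv_lhs => rw [hspec]
    calc (U * diagonal (fun i => (μ i + lam)⁻¹) * Uᴴ * (U * diagonal μ * Uᴴ)).trace
        = (U * (diagonal (fun i => (μ i + lam)⁻¹) * diagonal μ) * Uᴴ).trace := by
          rw [show U * diagonal (fun i => (μ i + lam)⁻¹) * Uᴴ * (U * diagonal μ * Uᴴ)
            = U * diagonal (fun i => (μ i + lam)⁻¹) * (Uᴴ * U) * diagonal μ * Uᴴ by noncomm_ring,
            hUU, mul_one]
          noncomm_ring
      _ = (Uᴴ * U * (diagonal (fun i => (μ i + lam)⁻¹) * diagonal μ)).trace := by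
          rw [Matrix.trace_mul_comm, ← Matrix.mul_assoc]
      _ = ∑ i, (μ i + lam)⁻¹ * μ i := by
          rw [hUU, one_mul, diagonal_mul_diagonal, trace_diagonal]
  -- determinants
  have hdetU : U.det * Uᴴ.det = 1 := by
    rw [← det_mul, hUU', det_one]
  have hdet : (A + lam • (1 : Matrix (Fin d) (Fin d) ℝ)).det = ∏ i, (μ i + lam) := by
    rw [hSig, det_mul, det_mul, det_diagonal]
    rw [mul_right_comm, hdetU, one_mul]
  have hdetl : (lam • (1 : Matrix (Fin d) (Fin d) ℝ)).det = lam ^ d := by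
    simp [det_smul]
  rw [htr, hdet, hdetl]
  have hquot : (∏ i, (μ i + lam)) / lam ^ d = ∏ i : Fin d, ((μ i + lam) / lam) := by
    rw [Finset.prod_div_distrib, Finset.prod_const]
    simp
  rw [hquot, Real.log_prod (fun i _ => div_ne_zero (hpos i).ne' hlam.ne'), Finset.mul_sum]
  apply Finset.sum_le_sum
  intro i _
  have key := aux_log (μ i / lam) ((n_o:ℝ) / lam) (div_nonneg (hμ0 i) hlam.le)
    (div_le_div_of_nonneg_right (hμle i) hlam.le)
  have e1 : (μ i + lam) / lam = 1 + μ i / lam := by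
    rw [add_div, div_self hlam.ne', add_comm]
  have e2 : (μ i / lam) / (1 + μ i / lam) = (μ i + lam)⁻¹ * μ i := by
    rw [← e1]
    have h1 : lam ≠ 0 := hlam.ne'
    have h2 : μ i + lam ≠ 0 := (hpos i).ne'
    field_simp
  rw [e1]
  calc Real.log (1 + μ i / lam)
      ≤ (Real.log (1 + (n_o:ℝ) / lam) + 1) * ((μ i / lam) / (1 + μ i / lam)) := key
    _ = (Real.log (1 + (n_o:ℝ) / lam) + 1) * ((μ i + lam)⁻¹ * μ i) := by rw [e2]
end

section
/- Expected information gain bound for finite-dimensional linear models: Let X be a measurable space, ρ a probability distribution on X, and φ : X → ℝ^d a measurable feature map with ‖φ(x)‖₂ ≤ 1 for all x ∈ X. Let x₁,…,x_{n_o} be i.i.d. samples from ρ, let λ > 0, and define Σ_{n_o} = Σ_{i=1}^{n_o} φ(xᵢ)φ(xᵢ)ᵀ + λI and Σ_ρ = E_{x∼ρ}[φ(x)φ(x)ᵀ]. Then E[ log( det(Σ_{n_o}) / det(λI) ) ] ≤ rank(Σ_ρ) · ( log(1 + n_o/λ) + 1 ), where the expectation is over the i.i.d. samples. -/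
open MeasureTheory Matrix Finset

section Aux

lemma mulVecLin_sum_vecMulVec (d n : ℕ) (u : Fin n → Fin d → ℝ) (w : Fin d → ℝ) :
    (∑ i, vecMulVec (u i) (u i)).mulVecLin w = ∑ i, ((u i ⬝ᵥ w) • u i) := by
  funext k
  simp only [mulVecLin_apply, Matrix.mulVec, dotProduct, Finset.sum_apply, Pi.smul_apply,
    Matrix.sum_apply, vecMulVec_apply, of_apply, smul_eq_mul, Finset.sum_mul, Finset.mul_sum]
  rw [Finset.sum_comm]
  exact Finset.sum_congr rfl fun i _ => Finset.sum_congr rfl fun j _ => by ring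

lemma psd_sum_vecMulVec (d n : ℕ) (u : Fin n → Fin d → ℝ) :
    (∑ i, vecMulVec (u i) (u i)).PosSemidef := by
  rw [posSemidef_iff_dotProduct_mulVec]
  constructor
  · show _ = _
    ext i j
    simp [conjTranspose_apply, vecMulVec_apply, Matrix.sum_apply, mul_comm]
  · intro x
    have h1 : (∑ i, vecMulVec (u i) (u i)) *ᵥ x = ∑ i, ((u i ⬝ᵥ x) • u i) :=
      mulVecLin_sum_vecMulVec d n u x
    have h2 : x ⬝ᵥ (∑ i, ((u i ⬝ᵥ x) • u i)) = ∑ i, (u i ⬝ᵥ x) * (x ⬝ᵥ u i) := by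
      simp only [dotProduct, Finset.sum_apply, Pi.smul_apply, smul_eq_mul, Finset.mul_sum,
        Finset.sum_mul]
      rw [Finset.sum_comm]
      exact Finset.sum_congr rfl fun i _ => Finset.sum_congr rfl fun j _ =>
        Finset.sum_congr rfl fun k _ => by ring
    rw [star_trivial, h1, h2]
    apply Finset.sum_nonneg
    intro i _
    rw [dotProduct_comm x (u i)]
    exact mul_self_nonneg _

lemma trace_sum_vecMulVec (d n : ℕ) (u : Fin n → Fin d → ℝ) (hu : ∀ i, ∑ j, (u i j)^2 ≤ 1) :
    (∑ i, vecMulVec (u i) (u i)).trace ≤ n := by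
  rw [trace_sum]
  calc ∑ i, (vecMulVec (u i) (u i)).trace ≤ ∑ _i : Fin n, (1:ℝ) := by
        apply Finset.sum_le_sum
        intro i _
        simpa [Matrix.trace, Matrix.diag, vecMulVec_apply, pow_two] using hu i
    _ = n := by simp

lemma rank_sum_le (d n : ℕ) (M : Matrix (Fin d) (Fin d) ℝ) (u : Fin n → Fin d → ℝ)
    (hu : ∀ i v, M.mulVec v = 0 → ∑ j, u i j * v j = 0) :
    (∑ i, vecMulVec (u i) (u i)).rank ≤ M.rank := by
  classical
  set e : EuclideanSpace ℝ (Fin d) ≃ₗ[ℝ] (Fin d → ℝ) := WithLp.linearEquiv 2 ℝ (Fin d → ℝ) with he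
  set K : Submodule ℝ (EuclideanSpace ℝ (Fin d)) :=
    (LinearMap.ker M.mulVecLin).map (e.symm : (Fin d → ℝ) →ₗ[ℝ] EuclideanSpace ℝ (Fin d)) with hK
  set W : Submodule ℝ (EuclideanSpace ℝ (Fin d)) := Kᗮ with hW
  have hdim : Module.finrank ℝ W = M.rank := by
    have h1 := K.finrank_add_finrank_orthogonal
    rw [finrank_euclideanSpace, Fintype.card_fin] at h1
    have h3 : Module.finrank ℝ K = Module.finrank ℝ (LinearMap.ker M.mulVecLin) :=
      LinearEquiv.finrank_map_eq e.symm _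
    have h2 := LinearMap.finrank_range_add_finrank_ker M.mulVecLin
    rw [Module.finrank_fintype_fun_eq_card, Fintype.card_fin] at h2
    rw [Matrix.rank]
    rw [← hW, h3] at h1
    omega
  have hinner : ∀ a b : Fin d → ℝ,
      (inner ℝ ((WithLp.equiv 2 (Fin d → ℝ)).symm a) ((WithLp.equiv 2 (Fin d → ℝ)).symm b) : ℝ)
        = ∑ j, a j * b j := by
    intro a b
    simp [PiLp.inner_apply, RCLike.inner_apply, PiLp.toLp_apply, mul_comm]
  have hmem : ∀ i, e.symm (u i) ∈ W := by
    intro i v hv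
    obtain ⟨w, hw, rfl⟩ := hv
    have h0 := hu i w hw
    have : (inner ℝ ((e.symm : (Fin d → ℝ) →ₗ[ℝ] EuclideanSpace ℝ (Fin d)) w) (e.symm (u i)) : ℝ)
        = ∑ j, w j * u i j := hinner w (u i)
    rw [this, ← h0]
    exact Finset.sum_congr rfl fun j _ => mul_comm _ _
  have hrange : LinearMap.range (∑ i, vecMulVec (u i) (u i)).mulVecLin
      ≤ W.map (e : EuclideanSpace ℝ (Fin d) →ₗ[ℝ] (Fin d → ℝ)) := by
    rintro _ ⟨w, rfl⟩
    rw [mulVecLin_sum_vecMulVec]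
    apply Submodule.sum_mem
    intro i _
    exact Submodule.smul_mem _ _ ⟨e.symm (u i), hmem i, by simp⟩
  calc (∑ i, vecMulVec (u i) (u i)).rank
      ≤ Module.finrank ℝ (W.map (e : EuclideanSpace ℝ (Fin d) →ₗ[ℝ] (Fin d → ℝ))) :=
        Submodule.finrank_mono hrange
    _ = Module.finrank ℝ W := LinearEquiv.finrank_map_eq e W
    _ = M.rank := hdim

lemma det_add_smul_one_eq (d : ℕ) (A : Matrix (Fin d) (Fin d) ℝ) (hA : A.IsHermitian) (lam : ℝ) :
    (A + lam • 1).det = ∏ i, (hA.eigenvalues i + lam) := by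
  set U : Matrix (Fin d) (Fin d) ℝ := (hA.eigenvectorUnitary : Matrix (Fin d) (Fin d) ℝ) with hUdef
  have hUU : U * star U = 1 := (Matrix.mem_unitaryGroup_iff).mp hA.eigenvectorUnitary.2
  have hU := hA.spectral_theorem
  have h1 : (lam • (1: Matrix (Fin d) (Fin d) ℝ)) = U * (lam • 1) * star U := by
    rw [Matrix.mul_smul, mul_one, Matrix.smul_mul, hUU]
  calc (A + lam • 1).det
      = (U * (diagonal (RCLike.ofReal ∘ hA.eigenvalues) + lam • (1: Matrix (Fin d) (Fin d) ℝ))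
          * star U).det := by
        rw [Matrix.mul_add, Matrix.add_mul, ← h1]
        conv_lhs => rw [hU, Unitary.conjStarAlgAut_apply]
    _ = (diagonal (RCLike.ofReal ∘ hA.eigenvalues) + lam • (1: Matrix (Fin d) (Fin d) ℝ)).det := by
        rw [det_mul_right_comm, hUU, one_mul]
    _ = ∏ i, (hA.eigenvalues i + lam) := by
        rw [smul_one_eq_diagonal, diagonal_add, det_diagonal]
        simp

lemma trace_eq_sum_eigs (d : ℕ) (A : Matrix (Fin d) (Fin d) ℝ) (hA : A.IsHermitian) :
    A.trace = ∑ i, hA.eigenvalues i := by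
  set U : Matrix (Fin d) (Fin d) ℝ := (hA.eigenvectorUnitary : Matrix (Fin d) (Fin d) ℝ) with hUdef
  have hUU : star U * U = 1 := (Matrix.mem_unitaryGroup_iff').mp hA.eigenvectorUnitary.2
  calc A.trace = (U * diagonal (RCLike.ofReal ∘ hA.eigenvalues) * star U).trace := by
        conv_lhs => rw [hA.spectral_theorem, Unitary.conjStarAlgAut_apply]
    _ = (star U * (U * diagonal (RCLike.ofReal ∘ hA.eigenvalues))).trace := by
        rw [trace_mul_comm]
    _ = (diagonal (RCLike.ofReal ∘ hA.eigenvalues)).trace := by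
        rw [← mul_assoc, hUU, one_mul]
    _ = ∑ i, hA.eigenvalues i := by simp [trace_diagonal]

lemma det_add_smul_one_le (d r : ℕ) (A : Matrix (Fin d) (Fin d) ℝ) (hA : A.PosSemidef)
    (t : ℝ) (ht : 0 ≤ t) (htr : A.trace ≤ t) (hrank : A.rank ≤ r) (lam : ℝ) (hlam : 0 < lam) :
    (A + lam • 1).det ≤ lam ^ d * (1 + t / lam) ^ r := by
  classical
  have heig := hA.eigenvalues_nonneg
  have hsum : ∑ i, hA.1.eigenvalues i ≤ t := by
    rw [← trace_eq_sum_eigs d A hA.1]; exact htr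
  have heigle : ∀ i, hA.1.eigenvalues i ≤ t := fun i =>
    le_trans (Finset.single_le_sum (fun j _ => heig j) (Finset.mem_univ i)) hsum
  have hb : (1:ℝ) ≤ 1 + t / lam := le_add_of_nonneg_right (div_nonneg ht hlam.le)
  rw [det_add_smul_one_eq d A hA.1 lam]
  have step1 : ∏ i, (hA.1.eigenvalues i + lam)
      ≤ ∏ i : Fin d, (if hA.1.eigenvalues i ≠ 0 then lam * (1 + t / lam) else lam) := by
    apply Finset.prod_le_prod
    · intro i _; exact add_nonneg (heig i) hlam.le
    · intro i _
      by_cases h : hA.1.eigenvalues i ≠ 0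
      · rw [if_pos h]
        have : lam * (1 + t / lam) = lam + t := by field_simp
        rw [this, add_comm]
        exact add_le_add_right (heigle i) lam
      · rw [if_neg h]
        push_neg at h
        rw [h, zero_add]
  refine step1.trans ?_
  rw [Finset.prod_ite (fun _ => lam * (1 + t / lam)) (fun _ => lam), Finset.prod_const,
    Finset.prod_const]
  have hcard : (Finset.univ.filter (fun i => hA.1.eigenvalues i ≠ 0)).card = A.rank := by
    rw [hA.1.rank_eq_card_non_zero_eigs, Fintype.card_subtype]
  have hrd : A.rank ≤ d := by
    rw [← hcard]
    exact le_trans (Finset.card_filter_le _ _) (by simp)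
  have hcard2 : (Finset.univ.filter (fun i => ¬ hA.1.eigenvalues i ≠ 0)).card = d - A.rank := by
    have := Finset.card_filter_add_card_filter_not
      (s := (Finset.univ : Finset (Fin d))) (p := fun i => hA.1.eigenvalues i ≠ 0)
    rw [hcard] at this
    simp only [Finset.card_univ, Fintype.card_fin] at this
    omega
  rw [hcard, hcard2, mul_pow]
  calc lam ^ A.rank * (1 + t / lam) ^ A.rank * lam ^ (d - A.rank)
      = lam ^ d * (1 + t / lam) ^ A.rank := by
        rw [mul_right_comm, ← pow_add]
        congr 2
        omega
    _ ≤ lam ^ d * (1 + t / lam) ^ r := by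
        apply mul_le_mul_of_nonneg_left (pow_le_pow_right₀ hb hrank) (by positivity)

lemma ae_vanish (X : Type*) [MeasurableSpace X] (ρ : Measure X) [IsProbabilityMeasure ρ]
    (d : ℕ) (φ : X → Fin d → ℝ)
    (hint : ∀ i j, Integrable (fun x => φ x i * φ x j) ρ)
    (v : Fin d → ℝ)
    (hv : (Matrix.of fun i j => ∫ x, φ x i * φ x j ∂ρ).mulVec v = 0) :
    ∀ᵐ x ∂ρ, ∑ j, φ x j * v j = 0 := by
  set M : Matrix (Fin d) (Fin d) ℝ := Matrix.of fun i j => ∫ x, φ x i * φ x j ∂ρ with hM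
  have hexp : (fun x => (∑ j, φ x j * v j)^2)
      = fun x => ∑ i, ∑ j, (v i * v j) * (φ x i * φ x j) := by
    funext x
    rw [pow_two, Finset.sum_mul_sum]
    exact Finset.sum_congr rfl fun i _ => Finset.sum_congr rfl fun j _ => by ring
  have hfi : Integrable (fun x => (∑ j, φ x j * v j)^2) ρ := by
    rw [hexp]
    exact integrable_finset_sum _ fun i _ =>
      integrable_finset_sum _ fun j _ => (hint i j).const_mul _
  have hzero : ∫ x, (∑ j, φ x j * v j)^2 ∂ρ = 0 := by
    rw [hexp]
    rw [integral_finset_sum _ fun i _ =>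
      integrable_finset_sum _ fun j _ => (hint i j).const_mul _]
    have : ∀ i : Fin d, ∫ x, ∑ j, (v i * v j) * (φ x i * φ x j) ∂ρ
        = v i * ∑ j, M i j * v j := by
      intro i
      rw [integral_finset_sum _ fun j _ => (hint i j).const_mul _]
      rw [Finset.mul_sum]
      refine Finset.sum_congr rfl fun j _ => ?_
      rw [MeasureTheory.integral_const_mul]
      have : M i j = ∫ x, φ x i * φ x j ∂ρ := rfl
      rw [this]; ring
    rw [Finset.sum_congr rfl fun i _ => this i]
    have : ∀ i : Fin d, ∑ j, M i j * v j = 0 := fun i => congrFun hv i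
    simp [this]
  have h0 := (integral_eq_zero_iff_of_nonneg (fun x => sq_nonneg _) hfi).mp hzero
  filter_upwards [h0] with x hx
  exact pow_eq_zero_iff two_ne_zero |>.mp hx

end Aux

/-- **Expected information gain bound for finite-dimensional linear models.** For a
feature map `φ : X → ℝ^d` bounded in Euclidean norm by 1 and i.i.d. samples
`x₁,…,x_{n_o} ∼ ρ`, with `Σ_{n_o} = ∑ᵢ φ(xᵢ)φ(xᵢ)ᵀ + λI` and `Σ_ρ = E_ρ[φφᵀ]`,
`E[log(det Σ_{n_o} / det(λI))] ≤ rank(Σ_ρ) · (log(1 + n_o/λ) + 1)`. -/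
theorem expected_information_gain_bound
    (X : Type*) [MeasurableSpace X] (ρ : Measure X) [IsProbabilityMeasure ρ]
    (d : ℕ) (φ : X → Fin d → ℝ) (hφmeas : Measurable φ)
    (hφ : ∀ x, ∑ j, (φ x j) ^ 2 ≤ 1)
    (hint : ∀ i j, Integrable (fun x => φ x i * φ x j) ρ)
    (n_o : ℕ) (lam : ℝ) (hlam : 0 < lam) :
    (∫ ω, Real.log ((∑ i, vecMulVec (φ (ω i)) (φ (ω i))
            + lam • (1 : Matrix (Fin d) (Fin d) ℝ)).det
          / (lam • (1 : Matrix (Fin d) (Fin d) ℝ)).det)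
        ∂(Measure.pi fun _ : Fin n_o => ρ))
      ≤ ((Matrix.of fun i j => ∫ x, φ x i * φ x j ∂ρ).rank : ℝ)
        * (Real.log (1 + n_o / lam) + 1) := by
  classical
  set M : Matrix (Fin d) (Fin d) ℝ := Matrix.of fun i j => ∫ x, φ x i * φ x j ∂ρ with hM
  set r : ℕ := M.rank with hr
  set C : ℝ := (r : ℝ) * (Real.log (1 + n_o / lam) + 1) with hCdef
  let μ : Measure (Fin n_o → X) := Measure.pi fun _ : Fin n_o => ρ
  have hlog0 : 0 ≤ Real.log (1 + (n_o : ℝ) / lam) :=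
    Real.log_nonneg (le_add_of_nonneg_right (div_nonneg (Nat.cast_nonneg _) hlam.le))
  have hC : 0 ≤ C := mul_nonneg (Nat.cast_nonneg r) (by linarith)
  -- a.e. vanishing on the kernel of M
  obtain ⟨m, w, hwK, hwspan⟩ : ∃ (m : ℕ) (w : Fin m → (Fin d → ℝ)),
      (∀ k, M.mulVec (w k) = 0) ∧
      ∀ v, M.mulVec v = 0 → v ∈ Submodule.span ℝ (Set.range w) := by
    set K : Submodule ℝ (Fin d → ℝ) := LinearMap.ker M.mulVecLin with hK
    refine ⟨Module.finrank ℝ K, fun k => ((Module.finBasis ℝ K) k : Fin d → ℝ),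
      fun k => ((Module.finBasis ℝ K) k).2, ?_⟩
    intro v hv
    have hvK : v ∈ K := hv
    have hspan : Submodule.span ℝ (Set.range (fun k => ((Module.finBasis ℝ K) k : Fin d → ℝ)))
        = K := by
      have h1 : (Set.range (fun k => ((Module.finBasis ℝ K) k : Fin d → ℝ)))
          = K.subtype '' (Set.range (Module.finBasis ℝ K)) := by
        rw [← Set.range_comp]; rfl
      rw [h1, ← Submodule.map_span, (Module.finBasis ℝ K).span_eq, Submodule.map_top,
        Submodule.range_subtype]
    rw [hspan]
    exact hvK
  have hbae : ∀ᵐ x ∂ρ, ∀ k, ∑ j, φ x j * w k j = 0 := by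
    rw [ae_all_iff]
    intro k
    exact ae_vanish X ρ d φ hint (w k) (hwK k)
  have hgood : ∀ᵐ x ∂ρ, ∀ v, M.mulVec v = 0 → ∑ j, φ x j * v j = 0 := by
    filter_upwards [hbae] with x hx
    intro v hv
    refine Submodule.span_induction ?_ ?_ ?_ ?_ (hwspan v hv)
    · rintro _ ⟨k, rfl⟩
      exact hx k
    · simp
    · intro a b _ _ ha hb
      simp only [Pi.add_apply, mul_add, Finset.sum_add_distrib, ha, hb, add_zero]
    · intro c a _ ha
      simp only [Pi.smul_apply, smul_eq_mul]
      calc ∑ j, φ x j * (c * a j) = c * ∑ j, φ x j * a j := by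
            rw [Finset.mul_sum]
            exact Finset.sum_congr rfl fun j _ => by ring
        _ = 0 := by rw [ha, mul_zero]
  have hgoodpi : ∀ᵐ ω ∂μ, ∀ i, ∀ v, M.mulVec v = 0 → ∑ j, φ (ω i) j * v j = 0 := by
    rw [ae_all_iff]
    intro i
    exact (MeasureTheory.Measure.tendsto_eval_ae_ae (μ := fun _ : Fin n_o => ρ) (i := i)).eventually hgood
  have hbound : ∀ᵐ ω ∂μ, Real.log ((∑ i, vecMulVec (φ (ω i)) (φ (ω i))
      + lam • (1 : Matrix (Fin d) (Fin d) ℝ)).det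
      / (lam • (1 : Matrix (Fin d) (Fin d) ℝ)).det) ≤ C := by
    filter_upwards [hgoodpi] with ω hω
    set A : Matrix (Fin d) (Fin d) ℝ := ∑ i, vecMulVec (φ (ω i)) (φ (ω i)) with hA'
    have hA : A.PosSemidef := psd_sum_vecMulVec d n_o (fun i => φ (ω i))
    have htr : A.trace ≤ n_o := trace_sum_vecMulVec d n_o (fun i => φ (ω i)) (fun i => hφ (ω i))
    have hrank : A.rank ≤ r := rank_sum_le d n_o M (fun i => φ (ω i)) (fun i v hv => hω i v hv)
    have hdet_le : (A + lam • 1).det ≤ lam ^ d * (1 + (n_o : ℝ) / lam) ^ r :=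
      det_add_smul_one_le d r A hA (n_o : ℝ) (Nat.cast_nonneg _) htr hrank lam hlam
    have hdetpos : 0 < (A + lam • 1).det := by
      rw [det_add_smul_one_eq d A hA.1 lam]
      exact Finset.prod_pos fun i _ => add_pos_of_nonneg_of_pos (hA.eigenvalues_nonneg i) hlam
    have hdet1 : (lam • (1 : Matrix (Fin d) (Fin d) ℝ)).det = lam ^ d := by
      rw [det_smul, det_one, mul_one, Fintype.card_fin]
    rw [hdet1]
    have hlamd : (0:ℝ) < lam ^ d := pow_pos hlam d
    have hratio : (A + lam • 1).det / lam ^ d ≤ (1 + (n_o : ℝ) / lam) ^ r := by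
      rw [div_le_iff₀ hlamd, mul_comm]
      exact hdet_le
    calc Real.log ((A + lam • 1).det / lam ^ d)
        ≤ Real.log ((1 + (n_o : ℝ) / lam) ^ r) :=
          Real.log_le_log (div_pos hdetpos hlamd) hratio
      _ = (r : ℝ) * Real.log (1 + (n_o : ℝ) / lam) := by rw [Real.log_pow]
      _ ≤ C := by
          rw [hCdef, mul_add, mul_one]
          exact le_add_of_nonneg_right (Nat.cast_nonneg r)
  by_cases hI : Integrable (fun ω => Real.log ((∑ i, vecMulVec (φ (ω i)) (φ (ω i))
      + lam • (1 : Matrix (Fin d) (Fin d) ℝ)).det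
      / (lam • (1 : Matrix (Fin d) (Fin d) ℝ)).det)) μ
  · calc (∫ ω, Real.log ((∑ i, vecMulVec (φ (ω i)) (φ (ω i))
          + lam • (1 : Matrix (Fin d) (Fin d) ℝ)).det
          / (lam • (1 : Matrix (Fin d) (Fin d) ℝ)).det) ∂μ)
        ≤ ∫ _ω, C ∂μ := integral_mono_ae hI (integrable_const C) hbound
      _ = C := by simp [measure_univ]
  · rw [integral_undef hI]
    exact hC
end

section
/- Sequence bound for the expected information gain via the effective dimension: Let (μₛ)_{s≥1} be a nonincreasing sequence of nonnegative reals with Σ_{s=1}^{∞} μₛ ≤ 1, let ζ > 0 and n a positive integer. Define B(j) = Σ_{k=j}^{∞} μₖ and the effective dimension d* = min{ j ∈ ℕ : j ≥ B(j+1)·n/ζ² }. Then Σ_{s=1}^{∞} log( 1 + ζ^{-2}·μₛ·n ) ≤ 2·d*·( log(1 + n/ζ²) + 1 ). -/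
/-- **Sequence bound for the expected information gain via the effective dimension.**
Let `(μ s)_{s ∈ ℕ}` be a nonincreasing summable sequence of nonnegative reals with
`∑' s, μ s ≤ 1`, `ζ > 0` and `n` a positive integer. With tail sums
`B(j) = ∑_{k ≥ j} μ k` and effective dimension
`d* = min {j ∈ ℕ : B(j)·n/ζ² ≤ j}` (which, after re-indexing from 1-based to
0-based, is `min {j : j ≥ B(j+1)·n/ζ²}` of the paper), one has
`∑' s, log(1 + ζ⁻²·μ s·n) ≤ 2·d*·(log(1 + n/ζ²) + 1)`. -/
theorem tsum_log_effective_dimension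
    (μ : ℕ → ℝ) (hnn : ∀ s, 0 ≤ μ s) (hmono : Antitone μ)
    (hsum : Summable μ) (htot : (∑' s, μ s) ≤ 1)
    (ζ : ℝ) (hζ : 0 < ζ) (n : ℕ) (hn : 0 < n) :
    (∑' s, Real.log (1 + μ s * n / ζ ^ 2))
      ≤ 2 * (sInf {j : ℕ | (∑' m : ℕ, μ (j + m)) * n / ζ ^ 2 ≤ (j : ℝ)} : ℕ)
        * (Real.log (1 + n / ζ ^ 2) + 1) := by
  have hζ2 : (0:ℝ) < ζ ^ 2 := by positivity
  have hnz : (0:ℝ) ≤ (n:ℝ) / ζ ^ 2 := by positivity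
  set L := Real.log (1 + (n:ℝ) / ζ ^ 2) with hL
  have hL0 : 0 ≤ L := Real.log_nonneg (by linarith)
  have hμ1 : ∀ s, μ s ≤ 1 := fun s =>
    le_trans (Summable.le_tsum hsum s (fun i _ => hnn i)) htot
  set f : ℕ → ℝ := fun s => Real.log (1 + μ s * n / ζ ^ 2) with hf
  have hmn : ∀ s, 0 ≤ μ s * n / ζ ^ 2 := fun s =>
    div_nonneg (mul_nonneg (hnn s) (Nat.cast_nonneg n)) hζ2.le
  have hf0 : ∀ s, 0 ≤ f s := fun s => Real.log_nonneg (by linarith [hmn s])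
  have hfle : ∀ s, f s ≤ μ s * n / ζ ^ 2 := by
    intro s
    have hx : 0 < 1 + μ s * n / ζ ^ 2 := by linarith [hmn s]
    have := Real.log_le_sub_one_of_pos hx
    linarith
  have hfL : ∀ s, f s ≤ L := by
    intro s
    apply Real.log_le_log (by linarith [hmn s])
    have : μ s * n / ζ ^ 2 ≤ (n:ℝ) / ζ ^ 2 := by
      apply div_le_div_of_nonneg_right ?_ hζ2.le |>.trans_eq rfl
      nlinarith [hμ1 s, hnn s, (Nat.cast_pos (α := ℝ)).mpr hn]
    linarith
  have hg : Summable (fun s => μ s * n / ζ ^ 2) := by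
    have := hsum.mul_right ((n:ℝ) / ζ ^ 2)
    convert this using 2 with s
    · rfl
    · ring
  have hfs : Summable f := Summable.of_nonneg_of_le hf0 hfle hg
  set S := {j : ℕ | (∑' m : ℕ, μ (j + m)) * n / ζ ^ 2 ≤ (j : ℝ)} with hS
  have htail_le : ∀ j : ℕ, (∑' m : ℕ, μ (j + m)) ≤ 1 := by
    intro j
    have h1 : (∑' m : ℕ, μ (m + j)) ≤ ∑' s, μ s := by
      have := Summable.sum_add_tsum_nat_add j hsum
      have hh : 0 ≤ ∑ i ∈ Finset.range j, μ i :=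
        Finset.sum_nonneg (fun i _ => hnn i)
      linarith
    calc (∑' m : ℕ, μ (j + m)) = ∑' m : ℕ, μ (m + j) := by
          exact tsum_congr (fun m => by rw [Nat.add_comm])
      _ ≤ ∑' s, μ s := h1
      _ ≤ 1 := htot
  have hSne : S.Nonempty := by
    refine ⟨⌈(n:ℝ) / ζ ^ 2⌉₊, ?_⟩
    have h1 := htail_le ⌈(n:ℝ) / ζ ^ 2⌉₊
    have h2 : (n:ℝ) / ζ ^ 2 ≤ (⌈(n:ℝ) / ζ ^ 2⌉₊ : ℝ) := Nat.le_ceil _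
    have h3 : (∑' m : ℕ, μ (⌈(n:ℝ) / ζ ^ 2⌉₊ + m)) * n / ζ ^ 2 ≤ (n:ℝ) / ζ ^ 2 := by
      apply div_le_div_of_nonneg_right ?_ hζ2.le |>.trans_eq rfl
      nlinarith [(Nat.cast_pos (α := ℝ)).mpr hn, tsum_nonneg (L := SummationFilter.unconditional ℕ) (fun m => hnn (⌈(n:ℝ) / ζ ^ 2⌉₊ + m))]
    exact le_trans h3 h2
  set d := sInf S with hd
  have hdS : d ∈ S := Nat.sInf_mem hSne
  have hdle : (∑' m : ℕ, μ (d + m)) * n / ζ ^ 2 ≤ (d : ℝ) := hdS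
  -- split the sum
  have hsplit : (∑' s, f s) = (∑ i ∈ Finset.range d, f i) + ∑' m, f (m + d) :=
    (Summable.sum_add_tsum_nat_add d hfs).symm
  have hhead : (∑ i ∈ Finset.range d, f i) ≤ d * L := by
    calc (∑ i ∈ Finset.range d, f i) ≤ ∑ _i ∈ Finset.range d, L :=
          Finset.sum_le_sum (fun i _ => hfL i)
      _ = d * L := by simp [mul_comm]
  have htail : (∑' m, f (m + d)) ≤ (d : ℝ) := by
    have h1 : (∑' m, f (m + d)) ≤ ∑' m, μ (m + d) * n / ζ ^ 2 := by
      exact Summable.tsum_le_tsum (fun m => hfle (m + d))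
        (hfs.comp_injective (add_left_injective d))
        (hg.comp_injective (add_left_injective d))
    have h2 : (∑' m, μ (m + d) * n / ζ ^ 2) = (∑' m, μ (d + m)) * n / ζ ^ 2 := by
      rw [show (∑' m, μ (d + m)) = ∑' m, μ (m + d) from
        tsum_congr (fun m => by rw [Nat.add_comm])]
      rw [← tsum_mul_right, ← tsum_div_const]
    calc (∑' m, f (m + d)) ≤ (∑' m, μ (d + m)) * n / ζ ^ 2 := by rw [← h2]; exact h1
      _ ≤ (d : ℝ) := hdle
  have : (∑' s, f s) ≤ d * L + d := by
    rw [hsplit]; linarith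
  have hfinal : (d : ℝ) * L + d ≤ 2 * d * (L + 1) := by nlinarith [Nat.cast_nonneg (α := ℝ) d]
  calc (∑' s, f s) ≤ d * L + d := this
    _ ≤ 2 * d * (L + 1) := hfinal
end
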